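/- arXiv:2204.06494 — 4 statements merged into one kernel-verified Lean document; each statement's English description precedes it below -/
import Mathlib

section
/- Let K be a differential field of characteristic zero, let p ∈ K[y] be an ordinary polynomial in y (involving no proper derivatives of y), and let f = y' + p(y) ∈ K{y}. Then the composite map K[y] ↪ K{y} → K{y}/[f] is an isomorphism of K-algebras. In particular, every element of K{y} is congruent modulo the differential ideal [f] to a unique ordinary polynomial in K[y], and [f] is a proper prime differential ideal of K{y}. -/
open MvPolynomial

/-- The smallest differential ideal (ideal closed under `D`) containing the set `S`. -/
def diffIdealGen {R : Type*} [CommRing R] (D : R → R) (S : Set R) : Ideal R :=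
  sInf {I : Ideal R | S ⊆ I ∧ ∀ x ∈ I, D x ∈ I}

open scoped Polynomial

/-!
Substituting `y ↦ y`, `y' ↦ -p(y)` into `D` gives a derivation `δ q = q^{dK} - p q'` of `K[y]`.
The retraction `K{y} → K[y]`, `y^{(n)} ↦ δⁿ y`, intertwines `D` and `δ` and kills `f`, so its
kernel is a differential ideal containing `[f]`. Conversely `D (q(y)) ≡ (δ q)(y) mod [f]`, so
`y^{(n)} ≡ (δⁿ y)(y)` and every element is congruent mod `[f]` to its retraction. Hence `[f]` is
the kernel of a retraction onto the domain `K[y]` split by the inclusion `K[y] ↪ K{y}`.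
-/

section DiffIdealGen

variable {A : Type*} [CommRing A] (D : A → A) (S : Set A)

theorem subset_diffIdealGen : S ⊆ diffIdealGen D S :=
  fun _ hs => Submodule.mem_sInf.mpr fun _ hJ => hJ.1 hs

theorem apply_mem_diffIdealGen {x : A} (hx : x ∈ diffIdealGen D S) :
    D x ∈ diffIdealGen D S :=
  Submodule.mem_sInf.mpr fun J hJ => hJ.2 x (Submodule.mem_sInf.mp hx J hJ)

theorem diffIdealGen_le {J : Ideal A} (hS : S ⊆ J) (hJ : ∀ x ∈ J, D x ∈ J) :
    diffIdealGen D S ≤ J :=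
  sInf_le ⟨hS, hJ⟩

end DiffIdealGen

namespace FirstOrderReduction

variable {R : Type*} [CommRing R]

theorem algHom_aeval_X_zero (φ : MvPolynomial ℕ R →ₐ[R] R[X]) (hφ : φ (X 0) = Polynomial.X)
    (q : R[X]) : φ (Polynomial.aeval (X 0) q) = q := by
  rw [← Polynomial.aeval_algHom_apply, hφ, Polynomial.aeval_X_left_apply]

/-- `y ↦ y`, `y' ↦ -p(y)`; the images of the higher derivatives are irrelevant. -/
noncomputable def substDeriv (p : R[X]) : MvPolynomial ℕ R →ₐ[R] R[X] :=
  aeval fun n => if n = 0 then Polynomial.X else -p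

theorem substDeriv_X_zero (p : R[X]) : substDeriv p (X 0) = Polynomial.X := by
  simp [substDeriv]

theorem substDeriv_X_one (p : R[X]) : substDeriv p (X 1) = -p := by
  simp [substDeriv]

variable (p : R[X]) (d : Derivation ℤ (MvPolynomial ℕ R) (MvPolynomial ℕ R))

noncomputable def inducedDerivation : Derivation ℤ R[X] R[X] :=
  Derivation.mk'
    ((substDeriv p).toRingHom.toAddMonoidHom.comp
      ((d : MvPolynomial ℕ R →ₗ[ℤ] MvPolynomial ℕ R).toAddMonoidHom.comp
        (Polynomial.aeval (X 0 : MvPolynomial ℕ R)).toRingHom.toAddMonoidHom)).toIntLinearMap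
    fun q r => by
      simp [Derivation.leibniz, algHom_aeval_X_zero _ (substDeriv_X_zero p)]

theorem inducedDerivation_apply (q : R[X]) :
    inducedDerivation p d q = substDeriv p (d (Polynomial.aeval (X 0) q)) := rfl

variable {p d}

theorem inducedDerivation_C {dK : R → R} (hC : ∀ c, d (C c) = C (dK c)) (c : R) :
    inducedDerivation p d (Polynomial.C c) = Polynomial.C (dK c) := by
  rw [inducedDerivation_apply, Polynomial.aeval_C, algebraMap_eq, hC, substDeriv,
    aeval_C, Polynomial.algebraMap_eq]

theorem inducedDerivation_X (hX : ∀ j, d (X j) = X (j + 1)) :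
    inducedDerivation p d Polynomial.X = -p := by
  rw [inducedDerivation_apply, Polynomial.aeval_X, hX, substDeriv_X_one]

variable (p d)

noncomputable def derivSeq (n : ℕ) : R[X] :=
  (inducedDerivation p d)^[n] Polynomial.X

theorem derivSeq_succ (n : ℕ) : derivSeq p d (n + 1) = inducedDerivation p d (derivSeq p d n) :=
  Function.iterate_succ_apply' _ _ _

noncomputable def retraction : MvPolynomial ℕ R →ₐ[R] R[X] :=
  aeval (derivSeq p d)

theorem retraction_X (n : ℕ) : retraction p d (X n) = derivSeq p d n :=
  aeval_X _ _

theorem retraction_aeval_X_zero (q : R[X]) : retraction p d (Polynomial.aeval (X 0) q) = q :=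
  algHom_aeval_X_zero _ (retraction_X p d 0) q

variable {p d}

theorem retraction_derivation {dK : R → R} (hC : ∀ c, d (C c) = C (dK c))
    (hX : ∀ j, d (X j) = X (j + 1)) (x : MvPolynomial ℕ R) :
    retraction p d (d x) = inducedDerivation p d (retraction p d x) := by
  induction x using MvPolynomial.induction_on with
  | C c => rw [hC, retraction, aeval_C, aeval_C, Polynomial.algebraMap_eq, inducedDerivation_C hC]
  | add a b ha hb => rw [map_add, map_add, ha, hb, map_add, map_add]
  | mul_X q n hq =>
    simp only [Derivation.leibniz, hX, map_add, map_mul, smul_eq_mul, retraction_X, derivSeq_succ,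
      hq]

theorem retraction_X_one_add_aeval (hX : ∀ j, d (X j) = X (j + 1)) :
    retraction p d (X 1 + Polynomial.aeval (X 0) p) = 0 := by
  rw [map_add, retraction_aeval_X_zero, retraction_X, derivSeq_succ, derivSeq,
    Function.iterate_zero_apply, inducedDerivation_X hX, neg_add_cancel]

section Ideal

variable {dK : R → R}

local notation "I" => diffIdealGen d {X 1 + Polynomial.aeval (X 0 : MvPolynomial ℕ R) p}

theorem diffIdealGen_le_ker_retraction (hC : ∀ c, d (C c) = C (dK c))
    (hX : ∀ j, d (X j) = X (j + 1)) : I ≤ RingHom.ker (retraction p d) := by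
  refine diffIdealGen_le _ _ (by simpa using retraction_X_one_add_aeval hX) fun x hx => ?_
  rw [RingHom.mem_ker] at hx ⊢
  rw [retraction_derivation hC hX, hx, map_zero]

theorem derivation_aeval_sub_mem_mul {q r : R[X]}
    (hq : d (Polynomial.aeval (X 0) q) - Polynomial.aeval (X 0) (inducedDerivation p d q) ∈ I)
    (hr : d (Polynomial.aeval (X 0) r) - Polynomial.aeval (X 0) (inducedDerivation p d r) ∈ I) :
    d (Polynomial.aeval (X 0) (q * r)) - Polynomial.aeval (X 0) (inducedDerivation p d (q * r))
      ∈ I := by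
  convert add_mem (Ideal.mul_mem_left _ (Polynomial.aeval (X 0) q) hr)
    (Ideal.mul_mem_left _ (Polynomial.aeval (X 0) r) hq) using 1
  simp only [map_mul, Derivation.leibniz, smul_eq_mul, map_add]
  ring

theorem derivation_aeval_sub_mem (hC : ∀ c, d (C c) = C (dK c))
    (hX : ∀ j, d (X j) = X (j + 1)) (q : R[X]) :
    d (Polynomial.aeval (X 0) q) - Polynomial.aeval (X 0) (inducedDerivation p d q) ∈ I := by
  induction q using Polynomial.induction_on with
  | C c =>
    rw [inducedDerivation_C hC, Polynomial.aeval_C, Polynomial.aeval_C, algebraMap_eq, hC,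
      sub_self]
    exact zero_mem _
  | add q r hq hr =>
    convert add_mem hq hr using 1
    simp only [map_add]
    ring
  | monomial n c hn =>
    have hy : d (Polynomial.aeval (X 0) (Polynomial.X : R[X])) -
        Polynomial.aeval (X 0) (inducedDerivation p d Polynomial.X) ∈ I := by
      rw [Polynomial.aeval_X, hX, inducedDerivation_X hX, map_neg, sub_neg_eq_add]
      exact subset_diffIdealGen _ _ rfl
    rw [pow_succ, ← mul_assoc]
    exact derivation_aeval_sub_mem_mul hn hy

theorem X_sub_aeval_derivSeq_mem (hC : ∀ c, d (C c) = C (dK c))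
    (hX : ∀ j, d (X j) = X (j + 1)) (n : ℕ) :
    X n - Polynomial.aeval (X 0) (derivSeq p d n) ∈ I := by
  induction n with
  | zero => simp [derivSeq]
  | succ n ih =>
    convert add_mem (apply_mem_diffIdealGen _ _ ih)
      (derivation_aeval_sub_mem hC hX (derivSeq p d n)) using 1
    rw [map_sub, hX, derivSeq_succ]
    ring

theorem sub_aeval_retraction_mem (hC : ∀ c, d (C c) = C (dK c))
    (hX : ∀ j, d (X j) = X (j + 1)) (x : MvPolynomial ℕ R) :
    x - Polynomial.aeval (X 0) (retraction p d x) ∈ I := by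
  induction x using MvPolynomial.induction_on with
  | C c => simp [retraction]
  | add a b ha hb =>
    convert add_mem ha hb using 1
    simp only [map_add]
    ring
  | mul_X q n hq =>
    convert add_mem (Ideal.mul_mem_left _ q (X_sub_aeval_derivSeq_mem hC hX n))
      (Ideal.mul_mem_right (Polynomial.aeval (X 0) (derivSeq p d n)) _ hq) using 1
    simp only [map_mul, retraction_X]
    ring

theorem diffIdealGen_eq_ker_retraction (hC : ∀ c, d (C c) = C (dK c))
    (hX : ∀ j, d (X j) = X (j + 1)) : I = RingHom.ker (retraction p d) := by
  refine le_antisymm (diffIdealGen_le_ker_retraction hC hX) fun x hx => ?_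
  simpa [RingHom.mem_ker.mp hx] using sub_aeval_retraction_mem (p := p) hC hX x

end Ideal

end FirstOrderReduction

open FirstOrderReduction in
theorem quotient_by_first_order_differential_polynomial_general
    {K : Type*} [Field K] (dK : K → K)
    (D : MvPolynomial ℕ K → MvPolynomial ℕ K)
    (hD_add : ∀ p q, D (p + q) = D p + D q)
    (hD_mul : ∀ p q, D (p * q) = p * D q + D p * q)
    (hD_C : ∀ c : K, D (MvPolynomial.C c) = MvPolynomial.C (dK c))
    (hD_X : ∀ j : ℕ, D (X j) = X (j + 1))
    (p : Polynomial K) :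
    Function.Bijective
      ((Ideal.Quotient.mkₐ K (diffIdealGen D
          {X 1 + Polynomial.aeval (X 0 : MvPolynomial ℕ K) p})).comp
        (Polynomial.aeval (X 0 : MvPolynomial ℕ K) : Polynomial K →ₐ[K] MvPolynomial ℕ K)) ∧
    (diffIdealGen D {X 1 + Polynomial.aeval (X 0 : MvPolynomial ℕ K) p}).IsPrime := by
  obtain ⟨d, rfl⟩ : ∃ d : Derivation ℤ (MvPolynomial ℕ K) (MvPolynomial ℕ K), ⇑d = D :=
    ⟨Derivation.mk' (AddMonoidHom.mk' D hD_add).toIntLinearMap fun a b => by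
      simp [hD_mul, mul_comm], rfl⟩
  have hI := diffIdealGen_eq_ker_retraction (p := p) hD_C hD_X
  refine ⟨⟨fun q r hqr => ?_, fun z => ?_⟩, hI ▸ RingHom.ker_isPrime _⟩
  · have hmem := Ideal.Quotient.eq.mp hqr
    rw [hI, RingHom.mem_ker] at hmem
    simpa [retraction_aeval_X_zero, sub_eq_zero] using hmem
  · obtain ⟨x, rfl⟩ := Ideal.Quotient.mk_surjective z
    exact ⟨retraction p d x, (Ideal.Quotient.eq.mpr (sub_aeval_retraction_mem hD_C hD_X x)).symm⟩

/-- **`K{y}/[y' + p(y)] ≅ K[y]`.**  Let `K` be a differential field of characteristic zero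
with derivation `dK`, let `p ∈ K[y]` be an ordinary polynomial, and let `f = y' + p(y)` in
the differential polynomial ring `K{y}`, modelled as `MvPolynomial ℕ K` with `X j` playing
the role of `y^{(j)}` and `D` the unique derivation extending `dK` with
`y^{(j)} ↦ y^{(j+1)}`.  Then the composite `K[y] ↪ K{y} → K{y}/[f]` (where the first map
sends `y ↦ y^{(0)}`) is an isomorphism of `K`-algebras; in particular every element of
`K{y}` is congruent modulo `[f]` to a unique ordinary polynomial in `K[y]`, and `[f]` is a
proper prime differential ideal of `K{y}`. -/
theorem quotient_by_first_order_differential_polynomial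
    {K : Type*} [Field K] [CharZero K] (dK : K → K)
    (hdK_add : ∀ a b : K, dK (a + b) = dK a + dK b)
    (hdK_mul : ∀ a b : K, dK (a * b) = a * dK b + dK a * b)
    (D : MvPolynomial ℕ K → MvPolynomial ℕ K)
    (hD_add : ∀ p q, D (p + q) = D p + D q)
    (hD_mul : ∀ p q, D (p * q) = p * D q + D p * q)
    (hD_C : ∀ c : K, D (MvPolynomial.C c) = MvPolynomial.C (dK c))
    (hD_X : ∀ j : ℕ, D (X j) = X (j + 1))
    (p : Polynomial K) :
    Function.Bijective
      ((Ideal.Quotient.mkₐ K (diffIdealGen D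
          {X 1 + Polynomial.aeval (X 0 : MvPolynomial ℕ K) p})).comp
        (Polynomial.aeval (X 0 : MvPolynomial ℕ K) : Polynomial K →ₐ[K] MvPolynomial ℕ K)) ∧
    (diffIdealGen D {X 1 + Polynomial.aeval (X 0 : MvPolynomial ℕ K) p}).IsPrime :=
  quotient_by_first_order_differential_polynomial_general dK D hD_add hD_mul hD_C hD_X p
end

section
/- Let E be a differential field of characteristic zero and E{r₁, r₂} the differential polynomial ring in two differential indeterminates r₁, r₂. Let a, b ∈ E[r₁, r₂] (the subring of polynomials in the variables r₁ = r₁^{(0)} and r₂ = r₂^{(0)} alone, involving no proper derivatives) with b ≠ 0. Then the variable r₁' = r₁^{(1)} does not occur in a'b − ab' if and only if a/b lies in the subfield E(r₂) of the fraction field of E{r₁, r₂}, i.e., if and only if a = e·b for some e ∈ E(r₂). -/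
open MvPolynomial


open Polynomial

set_option linter.unusedSectionVars false
set_option maxHeartbeats 1000000
set_option synthInstance.maxHeartbeats 200000
namespace R1Aux

noncomputable section
variable {E : Type*} [Field E] [CharZero E] (dE : E → E)

def S : Set (Fin 2 × ℕ) := {v | v.2 = 0}
abbrev Rg (E : Type*) [Field E] := MvPolynomial (Fin 2 × ℕ) E

lemma mem_adjoin {p : Rg E} (hp : p ∈ MvPolynomial.supported E S) :
    p ∈ Algebra.adjoin E (MvPolynomial.X '' S) := hp

lemma pderiv_mem (v : Fin 2 × ℕ) {p : Rg E} (hp : p ∈ MvPolynomial.supported E S) :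
    pderiv v p ∈ MvPolynomial.supported E S := by
  have h := mem_adjoin hp
  clear hp
  induction h using Algebra.adjoin_induction with
  | mem x hx =>
      obtain ⟨w, hw, rfl⟩ := hx
      rcases eq_or_ne w v with rfl | h
      · rw [pderiv_X_self]; exact one_mem _
      · rw [pderiv_X_of_ne h]; exact zero_mem _
  | algebraMap r =>
      rw [MvPolynomial.algebraMap_eq, pderiv_C]; exact zero_mem _
  | add x y hx hy ihx ihy => rw [map_add]; exact add_mem ihx ihy
  | mul x y hx hy ihx ihy =>
      rw [pderiv_mul]
      exact add_mem (mul_mem ihx hy) (mul_mem hx ihy)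


lemma formulaD (D : Rg E → Rg E)
    (hD_add : ∀ p q, D (p + q) = D p + D q)
    (hD_mul : ∀ p q, D (p * q) = p * D q + D p * q)
    (hD_C : ∀ c : E, D (MvPolynomial.C c) = MvPolynomial.C (dE c))
    (hD_X : ∀ (i : Fin 2) (j : ℕ), D (X (i, j)) = X (i, j + 1))
    {p : Rg E} (hp : p ∈ MvPolynomial.supported E S) :
    ∃ c ∈ MvPolynomial.supported E S,
      D p = pderiv ((0 : Fin 2), 0) p * X ((0 : Fin 2), 1)
          + pderiv ((1 : Fin 2), 0) p * X ((1 : Fin 2), 1) + c := by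
  have h := mem_adjoin hp
  clear hp
  induction h using Algebra.adjoin_induction with
  | mem x hx =>
      obtain ⟨⟨i, j⟩, hw, rfl⟩ := hx
      have hj : j = 0 := hw
      subst hj
      refine ⟨0, zero_mem _, ?_⟩
      fin_cases i <;> simp only [Fin.zero_eta, Fin.mk_one, Fin.isValue] <;>
        rw [hD_X, pderiv_X_self, pderiv_X_of_ne (by decide)] <;> ring
  | algebraMap r =>
      refine ⟨MvPolynomial.C (dE r), ?_, ?_⟩
      · rw [mem_supported]; simp [MvPolynomial.vars_C]
      · rw [MvPolynomial.algebraMap_eq, hD_C, pderiv_C, pderiv_C]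
        ring
  | add x y hx hy ihx ihy =>
      obtain ⟨cx, hcx, hx'⟩ := ihx
      obtain ⟨cy, hcy, hy'⟩ := ihy
      refine ⟨cx + cy, add_mem hcx hcy, ?_⟩
      rw [hD_add, hx', hy', map_add, map_add]
      ring
  | mul x y hx hy ihx ihy =>
      obtain ⟨cx, hcx, hx'⟩ := ihx
      obtain ⟨cy, hcy, hy'⟩ := ihy
      refine ⟨x * cy + cx * y, add_mem (mul_mem hx hcy) (mul_mem hcx hy), ?_⟩
      rw [hD_mul, hx', hy', pderiv_mul, pderiv_mul]
      ring


def phi : Rg E →ₐ[E] Polynomial (Polynomial E) :=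
  MvPolynomial.aeval fun v =>
    if v = ((0 : Fin 2), 0) then Polynomial.X
    else if v = ((1 : Fin 2), 0) then Polynomial.C Polynomial.X else 0

def chi : Polynomial (Polynomial E) →+* Rg E :=
  Polynomial.eval₂RingHom
    (Polynomial.eval₂RingHom MvPolynomial.C (MvPolynomial.X ((1 : Fin 2), 0)))
    (MvPolynomial.X ((0 : Fin 2), 0))

def psi : Polynomial E →+* Rg E :=
  Polynomial.eval₂RingHom MvPolynomial.C (MvPolynomial.X ((1 : Fin 2), 0))

lemma phi_X0 : phi (E := E) (MvPolynomial.X ((0 : Fin 2), 0)) = Polynomial.X := by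
  simp [phi]

lemma phi_X1 : phi (E := E) (MvPolynomial.X ((1 : Fin 2), 0)) = Polynomial.C Polynomial.X := by
  simp [phi]

lemma chi_C (r : Polynomial E) : chi (Polynomial.C r) = psi r := by
  simp [chi, psi]

lemma chi_phi {p : Rg E} (hp : p ∈ MvPolynomial.supported E S) : chi (phi p) = p := by
  have h := mem_adjoin hp
  clear hp
  induction h using Algebra.adjoin_induction with
  | mem x hx =>
      obtain ⟨⟨i, j⟩, hw, rfl⟩ := hx
      have hj : j = 0 := hw
      subst hj
      fin_cases i <;> simp only [Fin.zero_eta, Fin.mk_one, Fin.isValue]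
      · rw [phi_X0]; simp [chi]
      · rw [phi_X1, chi_C, psi]; simp
  | algebraMap r =>
      rw [MvPolynomial.algebraMap_eq]
      have : phi (E := E) (MvPolynomial.C r) = Polynomial.C (Polynomial.C r) := by
        simp [phi, MvPolynomial.algebraMap_eq, Polynomial.algebraMap_eq]
      rw [this, chi_C, psi]; simp
  | add x y hx hy ihx ihy => rw [map_add, map_add, ihx, ihy]
  | mul x y hx hy ihx ihy => rw [map_mul, map_mul, ihx, ihy]

lemma phi_pderiv {p : Rg E} (hp : p ∈ MvPolynomial.supported E S) :
    phi (pderiv ((0 : Fin 2), 0) p) = Polynomial.derivative (phi p) := by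
  have h := mem_adjoin hp
  clear hp
  induction h using Algebra.adjoin_induction with
  | mem x hx =>
      obtain ⟨⟨i, j⟩, hw, rfl⟩ := hx
      have hj : j = 0 := hw
      subst hj
      fin_cases i <;> simp only [Fin.zero_eta, Fin.mk_one, Fin.isValue]
      · rw [phi_X0, pderiv_X_self]; simp
      · rw [phi_X1, pderiv_X_of_ne (by decide)]; simp
  | algebraMap r =>
      rw [MvPolynomial.algebraMap_eq, pderiv_C]
      have : phi (E := E) (MvPolynomial.C r) = Polynomial.C (Polynomial.C r) := by
        simp [phi, MvPolynomial.algebraMap_eq, Polynomial.algebraMap_eq]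
      rw [this]; simp
  | add x y hx hy ihx ihy =>
      rw [map_add, map_add, map_add, ihx, ihy, Polynomial.derivative_add]
  | mul x y hx hy ihx ihy =>
      rw [pderiv_mul, map_add, map_mul, map_mul, map_mul, ihx, ihy,
        Polynomial.derivative_mul]

lemma phi_psi (r : Polynomial E) : phi (E := E) (psi r) = Polynomial.C r := by
  induction r using Polynomial.induction_on' with
  | add p q hp hq => rw [map_add, map_add, hp, hq, map_add]
  | monomial n a =>
      rw [psi]
      simp only [Polynomial.coe_eval₂RingHom, Polynomial.eval₂_monomial]
      rw [map_mul, map_pow, phi_X1]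
      have : phi (E := E) (MvPolynomial.C a) = Polynomial.C (Polynomial.C a) := by
        simp [phi, MvPolynomial.algebraMap_eq, Polynomial.algebraMap_eq]
      rw [this, ← map_pow, ← map_mul, Polynomial.C_mul_X_pow_eq_monomial]

lemma psi_ne_zero {r : Polynomial E} (hr : r ≠ 0) : psi (E := E) r ≠ 0 := fun h => by
  apply hr
  have := phi_psi (E := E) r
  rw [h, map_zero] at this
  exact (Polynomial.C_eq_zero.mp this.symm)

lemma pderiv_x_psi (r : Polynomial E) : pderiv ((0 : Fin 2), 0) (psi (E := E) r) = 0 := by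
  induction r using Polynomial.induction_on' with
  | add p q hp hq => rw [map_add, map_add, hp, hq, add_zero]
  | monomial n a =>
      rw [psi]
      simp only [Polynomial.coe_eval₂RingHom, Polynomial.eval₂_monomial]
      rw [pderiv_mul, pderiv_C, pderiv_pow, pderiv_X_of_ne (by decide)]
      ring

lemma psi_C (c : E) : psi (E := E) (Polynomial.C c) = MvPolynomial.C c := by
  simp [psi]

lemma psi_X : psi (E := E) Polynomial.X = MvPolynomial.X ((1 : Fin 2), 0) := by
  simp [psi]


lemma exists_psi_rel {a b : Rg E}
    (ha : a ∈ MvPolynomial.supported E S) (hb : b ∈ MvPolynomial.supported E S)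
    (hb0 : b ≠ 0)
    (hW : pderiv ((0 : Fin 2), 0) a * b = a * pderiv ((0 : Fin 2), 0) b) :
    ∃ p q : Polynomial E, q ≠ 0 ∧ a * psi q = b * psi p := by
  have hB0 : phi (E := E) b ≠ 0 := by
    intro h
    apply hb0
    have := chi_phi hb
    rw [h, map_zero] at this
    exact this.symm
  have hAB : Polynomial.derivative (phi a) * phi b
      = phi a * Polynomial.derivative (phi b) := by
    rw [← phi_pderiv ha, ← phi_pderiv hb, ← map_mul, ← map_mul, hW]
  obtain ⟨B₁, A₁, d, hrel, hdB, hdA⟩ :=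
    UniqueFactorizationMonoid.exists_reduced_factors (phi (E := E) b) hB0 (phi a)
  have hd0 : d ≠ 0 := fun h => hB0 (by rw [← hdB, h, zero_mul])
  have hB₁0 : B₁ ≠ 0 := fun h => hB0 (by rw [← hdB, h, mul_zero])
  have key : Polynomial.derivative A₁ * B₁ = A₁ * Polynomial.derivative B₁ := by
    have h2 : d * d * (Polynomial.derivative A₁ * B₁ - A₁ * Polynomial.derivative B₁) = 0 := by
      rw [← hdA, ← hdB, Polynomial.derivative_mul, Polynomial.derivative_mul] at hAB
      linear_combination hAB
    have := mul_eq_zero.mp h2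
    rcases this with h | h
    · exact absurd h (mul_ne_zero hd0 hd0)
    · exact sub_eq_zero.mp h
  have hdvd : B₁ ∣ Polynomial.derivative B₁ := by
    apply UniqueFactorizationMonoid.dvd_of_dvd_mul_left_of_no_prime_factors hB₁0
      (fun {t} htB htA hpt => hpt.not_unit (hrel htB htA))
    exact ⟨Polynomial.derivative A₁, by linear_combination -key⟩
  have hdB₁ : Polynomial.derivative B₁ = 0 := by
    by_contra h
    exact absurd (Polynomial.degree_le_of_dvd hdvd h)
      (not_le_of_gt (Polynomial.degree_derivative_lt hB₁0))
  have hdA₁ : Polynomial.derivative A₁ = 0 := by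
    have : Polynomial.derivative A₁ * B₁ = 0 := by rw [key, hdB₁, mul_zero]
    exact (mul_eq_zero.mp this).resolve_right hB₁0
  have hBC : B₁ = Polynomial.C (B₁.coeff 0) := Polynomial.eq_C_of_derivative_eq_zero hdB₁
  have hAC : A₁ = Polynomial.C (A₁.coeff 0) := Polynomial.eq_C_of_derivative_eq_zero hdA₁
  have hrel2 : phi a * B₁ = phi b * A₁ := by rw [← hdA, ← hdB]; ring
  refine ⟨A₁.coeff 0, B₁.coeff 0, ?_, ?_⟩
  · intro h
    rw [h, Polynomial.C_0] at hBC
    exact hB₁0 hBC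
  · have := congrArg chi hrel2
    rw [hBC, hAC] at hrel2
    have h3 := congrArg (chi (E := E)) hrel2
    rw [map_mul, map_mul, chi_C, chi_C, chi_phi ha, chi_phi hb] at h3
    exact h3


abbrev F (E : Type*) [Field E] := FractionRing (Rg E)

def M (E : Type*) [Field E] : Rg E →+* F E := algebraMap (Rg E) (F E)

def T (E : Type*) [Field E] : Set (F E) :=
  (Set.range fun c : E => M E (MvPolynomial.C c)) ∪ {M E (MvPolynomial.X ((1 : Fin 2), 0))}

lemma M_inj : Function.Injective (M E) := IsFractionRing.injective _ _

lemma M_ne_zero {p : Rg E} (hp : p ≠ 0) : M E p ≠ 0 := fun h => hp (M_inj (by rw [h, map_zero]))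

lemma psi_mem_closure (r : Polynomial E) : M E (psi r) ∈ Subfield.closure (T E) := by
  induction r using Polynomial.induction_on' with
  | add p q hp hq => rw [map_add, map_add]; exact add_mem hp hq
  | monomial n c =>
      have : psi (E := E) (Polynomial.monomial n c)
          = MvPolynomial.C c * MvPolynomial.X ((1 : Fin 2), 0) ^ n := by
        simp [psi]
      rw [this, map_mul, map_pow]
      have h1 : M E (MvPolynomial.C c) ∈ Subfield.closure (T E) :=
        Subfield.subset_closure (Or.inl ⟨c, rfl⟩)
      have h2 : M E (MvPolynomial.X ((1 : Fin 2), 0)) ∈ Subfield.closure (T E) :=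
        Subfield.subset_closure (Or.inr rfl)
      exact mul_mem h1 (pow_mem h2 n)

lemma rep_of_mem_closure {f : F E} (hf : f ∈ Subfield.closure (T E)) :
    ∃ p q : Polynomial E, q ≠ 0 ∧ f * M E (psi q) = M E (psi p) := by
  induction hf using Subfield.closure_induction with
  | mem x hx =>
      rcases hx with ⟨c, rfl⟩ | hx
      · exact ⟨Polynomial.C c, 1, one_ne_zero, by rw [map_one, map_one, mul_one, psi_C]⟩
      · rw [Set.mem_singleton_iff] at hx
        subst hx
        exact ⟨Polynomial.X, 1, one_ne_zero, by rw [map_one, map_one, mul_one, psi_X]⟩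
  | one => exact ⟨1, 1, one_ne_zero, by rw [one_mul]⟩
  | add x y hx hy ihx ihy =>
      obtain ⟨p₁, q₁, hq₁, h₁⟩ := ihx
      obtain ⟨p₂, q₂, hq₂, h₂⟩ := ihy
      refine ⟨p₁ * q₂ + p₂ * q₁, q₁ * q₂, mul_ne_zero hq₁ hq₂, ?_⟩
      rw [map_add, map_mul, map_mul, map_mul, map_add, map_mul, map_mul, map_mul]
      linear_combination M E (psi q₂) * h₁ + M E (psi q₁) * h₂
  | neg x hx ihx =>
      obtain ⟨p₁, q₁, hq₁, h₁⟩ := ihx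
      exact ⟨-p₁, q₁, hq₁, by rw [map_neg, map_neg]; linear_combination -h₁⟩
  | inv x hx ihx =>
      obtain ⟨p₁, q₁, hq₁, h₁⟩ := ihx
      rcases eq_or_ne x 0 with rfl | hx0
      · exact ⟨0, 1, one_ne_zero, by rw [inv_zero, zero_mul, map_zero, map_zero]⟩
      · have hq : M E (psi q₁) ≠ 0 := M_ne_zero (psi_ne_zero hq₁)
        have hp : M E (psi p₁) ≠ 0 := by
          rw [← h₁]
          exact mul_ne_zero hx0 hq
        have hp₁ : p₁ ≠ 0 := fun h => hp (by rw [h]; simp [map_zero])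
        refine ⟨q₁, p₁, hp₁, ?_⟩
        field_simp
        linear_combination -h₁
  | mul x y hx hy ihx ihy =>
      obtain ⟨p₁, q₁, hq₁, h₁⟩ := ihx
      obtain ⟨p₂, q₂, hq₂, h₂⟩ := ihy
      refine ⟨p₁ * p₂, q₁ * q₂, mul_ne_zero hq₁ hq₂, ?_⟩
      rw [map_mul, map_mul, map_mul, map_mul]
      linear_combination (y * M E (psi q₂)) * h₁ + M E (psi p₁) * h₂


lemma rel_of_mem_closure {a b : Rg E} (hb0 : b ≠ 0)
    (h : M E a / M E b ∈ Subfield.closure (T E)) :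
    pderiv ((0 : Fin 2), 0) a * b = a * pderiv ((0 : Fin 2), 0) b := by
  obtain ⟨p, q, hq0, hrep⟩ := rep_of_mem_closure h
  have hMb : M E b ≠ 0 := M_ne_zero hb0
  have hψq : psi (E := E) q ≠ 0 := psi_ne_zero hq0
  have h0 : a * psi q = b * psi p := by
    apply M_inj
    rw [map_mul, map_mul]
    field_simp at hrep
    linear_combination hrep
  have h1 := congrArg (pderiv ((0 : Fin 2), 0)) h0
  rw [pderiv_mul, pderiv_mul, pderiv_x_psi, pderiv_x_psi, mul_zero, mul_zero,
    add_zero, add_zero] at h1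
  apply mul_right_cancel₀ hψq
  linear_combination b * h1 - pderiv ((0 : Fin 2), 0) b * h0

lemma vars_iff (D : Rg E → Rg E)
    (hD_add : ∀ p q, D (p + q) = D p + D q)
    (hD_mul : ∀ p q, D (p * q) = p * D q + D p * q)
    (hD_C : ∀ c : E, D (MvPolynomial.C c) = MvPolynomial.C (dE c))
    (hD_X : ∀ (i : Fin 2) (j : ℕ), D (X (i, j)) = X (i, j + 1))
    {a b : Rg E}
    (ha : a ∈ MvPolynomial.supported E S) (hb : b ∈ MvPolynomial.supported E S) :
    ((0 : Fin 2), 1) ∉ (D a * b - a * D b).vars ↔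
      pderiv ((0 : Fin 2), 0) a * b = a * pderiv ((0 : Fin 2), 0) b := by
  classical
  obtain ⟨ca, hca, hDa⟩ := formulaD dE D hD_add hD_mul hD_C hD_X ha
  obtain ⟨cb, hcb, hDb⟩ := formulaD dE D hD_add hD_mul hD_C hD_X hb
  set u : Rg E := pderiv ((0 : Fin 2), 0) a * b - a * pderiv ((0 : Fin 2), 0) b with hu
  set v : Rg E := pderiv ((1 : Fin 2), 0) a * b - a * pderiv ((1 : Fin 2), 0) b with hv
  set w : Rg E := ca * b - a * cb with hw
  have hP : D a * b - a * D b
      = u * MvPolynomial.X ((0 : Fin 2), 1) + v * MvPolynomial.X ((1 : Fin 2), 1) + w := by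
    rw [hDa, hDb, hu, hv, hw]; ring
  have hum : u ∈ MvPolynomial.supported E S :=
    sub_mem (mul_mem (pderiv_mem _ ha) hb) (mul_mem ha (pderiv_mem _ hb))
  have hvm : v ∈ MvPolynomial.supported E S :=
    sub_mem (mul_mem (pderiv_mem _ ha) hb) (mul_mem ha (pderiv_mem _ hb))
  have hwm : w ∈ MvPolynomial.supported E S :=
    sub_mem (mul_mem hca hb) (mul_mem ha hcb)
  have hnot : ∀ {z : Rg E}, z ∈ MvPolynomial.supported E S →
      ∀ {t : Fin 2 × ℕ}, t.2 ≠ 0 → t ∉ z.vars := by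
    intro z hz t ht hmem
    exact ht ((mem_supported.mp hz) hmem)
  constructor
  · intro h
    have h0 : pderiv ((0 : Fin 2), 1) (D a * b - a * D b) = 0 :=
      pderiv_eq_zero_of_notMem_vars h
    rw [hP, map_add, map_add, pderiv_mul, pderiv_mul, pderiv_X_self,
      pderiv_X_of_ne (by decide),
      pderiv_eq_zero_of_notMem_vars (hnot hum (by decide)),
      pderiv_eq_zero_of_notMem_vars (hnot hvm (by decide)),
      pderiv_eq_zero_of_notMem_vars (hnot hwm (by decide))] at h0
    have hu0 : u = 0 := by simpa using h0
    rw [hu] at hu0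
    exact sub_eq_zero.mp hu0
  · intro hrel
    have hu0 : u = 0 := by rw [hu]; exact sub_eq_zero_of_eq hrel
    intro hmem
    rw [hP, hu0, zero_mul, zero_add] at hmem
    rcases Finset.mem_union.mp
        (MvPolynomial.vars_add_subset (v * MvPolynomial.X ((1 : Fin 2), 1)) w hmem)
      with hm | hm
    · rcases Finset.mem_union.mp (MvPolynomial.vars_mul _ _ hm) with hm' | hm'
      · exact hnot hvm (by decide) hm'
      · rw [MvPolynomial.vars_X, Finset.mem_singleton] at hm'
        exact absurd hm' (by decide)
    · exact hnot hwm (by decide) hm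

end
end R1Aux

/-- **When `r₁'` is absent from `a'b − ab'` (Lemma 7.4).**
Let `E` be a differential field of characteristic zero with derivation `dE` and let
`E{r₁, r₂}` be the differential polynomial ring in two differential indeterminates, modelled
as `MvPolynomial (Fin 2 × ℕ) E` with `X (i, j)` playing the role of `r_{i+1}^{(j)}` and `D`
the unique derivation extending `dE` with `r_i^{(j)} ↦ r_i^{(j+1)}`.  Let
`a, b ∈ E[r₁, r₂]` (no proper derivatives occur, i.e. `a, b` are supported on the variables
`(i, 0)`) with `b ≠ 0`.  Then the variable `r₁' = X (0, 1)` does not occur in `a'b − ab'`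
if and only if `a/b` lies in the subfield `E(r₂)` of the fraction field of `E{r₁, r₂}`. -/
theorem r1_prime_absent_iff_quotient_in_E_r2
    {E : Type*} [Field E] [CharZero E] (dE : E → E)
    (hdE_add : ∀ a b : E, dE (a + b) = dE a + dE b)
    (hdE_mul : ∀ a b : E, dE (a * b) = a * dE b + dE a * b)
    (D : MvPolynomial (Fin 2 × ℕ) E → MvPolynomial (Fin 2 × ℕ) E)
    (hD_add : ∀ p q, D (p + q) = D p + D q)
    (hD_mul : ∀ p q, D (p * q) = p * D q + D p * q)
    (hD_C : ∀ c : E, D (MvPolynomial.C c) = MvPolynomial.C (dE c))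
    (hD_X : ∀ (i : Fin 2) (j : ℕ), D (X (i, j)) = X (i, j + 1))
    (a b : MvPolynomial (Fin 2 × ℕ) E)
    (ha : a ∈ MvPolynomial.supported E {v : Fin 2 × ℕ | v.2 = 0})
    (hb : b ∈ MvPolynomial.supported E {v : Fin 2 × ℕ | v.2 = 0})
    (hb0 : b ≠ 0) :
    ((0 : Fin 2), 1) ∉ (D a * b - a * D b).vars ↔
      (algebraMap (MvPolynomial (Fin 2 × ℕ) E)
          (FractionRing (MvPolynomial (Fin 2 × ℕ) E)) a) /
        (algebraMap (MvPolynomial (Fin 2 × ℕ) E)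
          (FractionRing (MvPolynomial (Fin 2 × ℕ) E)) b) ∈
      Subfield.closure
        ((Set.range fun c : E =>
            algebraMap (MvPolynomial (Fin 2 × ℕ) E)
              (FractionRing (MvPolynomial (Fin 2 × ℕ) E)) (MvPolynomial.C c)) ∪
          {algebraMap (MvPolynomial (Fin 2 × ℕ) E)
              (FractionRing (MvPolynomial (Fin 2 × ℕ) E)) (X ((1 : Fin 2), 0))}) := by
  classical
  rw [R1Aux.vars_iff dE D hD_add hD_mul hD_C hD_X ha hb]
  have hMb : R1Aux.M E b ≠ 0 := R1Aux.M_ne_zero hb0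
  constructor
  · intro hrel
    obtain ⟨p, q, hq0, hr⟩ := R1Aux.exists_psi_rel ha hb hb0 hrel
    have hMq : R1Aux.M E (R1Aux.psi q) ≠ 0 := R1Aux.M_ne_zero (R1Aux.psi_ne_zero hq0)
    show R1Aux.M E a / R1Aux.M E b ∈ Subfield.closure (R1Aux.T E)
    have heq : R1Aux.M E a / R1Aux.M E b
        = R1Aux.M E (R1Aux.psi p) / R1Aux.M E (R1Aux.psi q) := by
      rw [div_eq_div_iff hMb hMq]
      have hM := congrArg (R1Aux.M E) hr
      rw [map_mul, map_mul] at hM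
      linear_combination hM
    rw [heq]
    exact div_mem (R1Aux.psi_mem_closure p) (R1Aux.psi_mem_closure q)
  · intro h
    exact R1Aux.rel_of_mem_closure hb0 h
end

section
/- Let E be a differential field of characteristic zero and let a₁⁺, a₂⁺, a₃⁺, a₁⁻, a₂⁻, a₃⁻, a₁⁰, a₂⁰ ∈ E. Let r₁, r₂ be differential indeterminates over E and let K = E⟨r₁, r₂⟩ be the fraction field of the differential polynomial ring E{r₁, r₂}. Define c₃ = 0, c₂ = −a₃⁺, c₁ = a₃⁺r₁r₂ − a₂⁺r₂ − a₁⁺r₁ + a₁⁰ + a₂⁰, and c₀ = a₁⁻r₂ + a₃⁻ − r₁(a₂⁻ + (a₂⁰ − a₁⁰)r₂) + r₁r₂(a₂⁺r₂ − a₂⁰) − r₁r₂', all elements of K. Then for every positive integer m, the system Σ_m with these coefficients has no solution in K^m. -/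
/-!
Differentiate the system partially with respect to the jet variables `r_i^{(j)}` of
`K = E⟨r₁, r₂⟩`. The partial derivative `∂/∂r_i^{(j+1)}` commutes with the derivation of `K` up
to the error term `∂/∂r_i^{(j)}`, while `c₁, c₂` involve no derivatives of `r₁, r₂` and `c₀` only
`r₂'`. Applying `∂/∂r_i^{(j+1)}` to the `k`-th equation therefore expresses `∂y_k/∂r_i^{(j)}` by
`(k + 1) (∂c₀/∂r_i^{(j+1)}) y_{k+1}`. Descending from the largest order occurring in the finitely
many `y_k` shows that no `y_k` involves a derivative of `r₁` or `r₂`. The same identity then gives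
`∂y_{m-1}/∂r₂ = -m r₁` and `∂y_{m-1}/∂r₁ = 0`, so the mixed second derivatives of `y_{m-1}` would
be `-m` and `0`: impossible in characteristic zero.
-/

open MvPolynomial

/-- Extension of a tuple `(y₀,…,y_{m−1})` to all integer indices by the
conventions `y_m = 1` and `y_k = 0` for `k < 0` (in particular `y_{−1} = y_{−2} = 0`). -/
def sigmaExt {K : Type*} [Zero K] [One K] (m : ℕ) (y : ℕ → K) : ℤ → K :=
  fun k => if k < 0 then 0 else if k.toNat < m then y k.toNat
    else if k = (m : ℤ) then 1 else 0

/-- The right hand side of the `k`-th equation of the system `Σ_m`. -/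
def sigmaRHS {K : Type*} [Field K] (c₀ c₁ c₂ c₃ : K) (m : ℕ) (Y : ℤ → K) (k : ℕ) : K :=
  c₃ * ((2 * Y ((m : ℤ) - 2) - Y ((m : ℤ) - 1) ^ 2) * Y (k : ℤ)
      - (m : K) * Y ((m : ℤ) - 3) + (k : K) * Y ((k : ℤ) - 2)
      + Y ((m : ℤ) - 1) * Y ((k : ℤ) - 1) - 2 * Y ((k : ℤ) - 2))
    + (c₂ * Y ((m : ℤ) - 1) - (m : K) * c₁ + (k : K) * c₁) * Y (k : ℤ)
    + ((k : K) - (m : K) - 1) * c₂ * Y ((k : ℤ) - 1)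
    + ((k : K) + 1) * c₀ * Y ((k : ℤ) + 1)

/-- `(y₀,…,y_{m−1}) ∈ K^m` is a solution of the system `Σ_m` for the differential field
`(K, d)` and the coefficients `c₀, c₁, c₂, c₃`. -/
def IsSigmaSolution {K : Type*} [Field K] (d : K → K) (c₀ c₁ c₂ c₃ : K) (m : ℕ)
    (y : ℕ → K) : Prop :=
  ∀ k : ℕ, k < m → d (y k) = sigmaRHS c₀ c₁ c₂ c₃ m (sigmaExt m y) k

/-- The canonical map `E{r₁, r₂} → E⟨r₁, r₂⟩` into the fraction field. -/
noncomputable def toFrac {E : Type*} [Field E] (p : MvPolynomial (Fin 2 × ℕ) E) :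
    FractionRing (MvPolynomial (Fin 2 × ℕ) E) :=
  algebraMap _ _ p

namespace Derivation

def ofAddLeibniz {A : Type*} [CommRing A] (f : A → A) (hadd : ∀ a b, f (a + b) = f a + f b)
    (hmul : ∀ a b, f (a * b) = a * f b + f a * b) : Derivation ℤ A A :=
  Derivation.mk' (AddMonoidHom.mk' f hadd).toIntLinearMap fun a b => by
    simp only [AddMonoidHom.coe_toIntLinearMap, AddMonoidHom.mk'_apply, hmul, smul_eq_mul]
    ring

section FractionRing

variable {A R : Type*} (K : Type*) [CommRing A] [CommRing R] [Algebra A R]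
  [Field K] [Algebra R K] [IsFractionRing R K]

noncomputable def quotientRule (δ : Derivation A R R) (x : K) : K :=
  let a := (IsLocalization.sec (nonZeroDivisors R) x).1
  let b : R := (IsLocalization.sec (nonZeroDivisors R) x).2
  (algebraMap R K (δ a) * algebraMap R K b - algebraMap R K a * algebraMap R K (δ b)) /
    algebraMap R K b ^ 2

variable [IsDomain R] {K}

theorem quotientRule_div (δ : Derivation A R R) (p : R) {q : R} (hq : q ∈ nonZeroDivisors R) :
    quotientRule K δ (algebraMap R K p / algebraMap R K q) =
      (algebraMap R K (δ p) * algebraMap R K q - algebraMap R K p * algebraMap R K (δ q)) /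
        algebraMap R K q ^ 2 := by
  obtain ⟨⟨a, b, hb⟩, hsec⟩ : ∃ s,
      IsLocalization.sec (nonZeroDivisors R) (algebraMap R K p / algebraMap R K q) = s :=
    ⟨_, rfl⟩
  have hspec := IsLocalization.sec_spec (nonZeroDivisors R) (algebraMap R K p / algebraMap R K q)
  simp only [quotientRule, hsec] at hspec ⊢
  set F := algebraMap R K
  have hFb : F b ≠ 0 := IsFractionRing.to_map_ne_zero_of_mem_nonZeroDivisors hb
  have hFq : F q ≠ 0 := IsFractionRing.to_map_ne_zero_of_mem_nonZeroDivisors hq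
  -- differentiate the cross-multiplied identity `a q = p b` in `R`
  have hcross : a * q = p * b := IsFractionRing.injective R K <| by
    show F (a * q) = F (p * b); rw [map_mul, map_mul, ← hspec]; field_simp
  have hcross' := congrArg (fun r => F (δ r)) hcross
  simp only [leibniz, smul_eq_mul, map_add, map_mul] at hcross'
  have hcrossK : F a * F q = F p * F b := by simpa only [map_mul] using congrArg F hcross
  rw [div_eq_div_iff (pow_ne_zero 2 hFb) (pow_ne_zero 2 hFq)]
  linear_combination (F b * F q) * hcross' - (F (δ b) * F q + F (δ q) * F b) * hcrossK

theorem quotientRule_algebraMap (δ : Derivation A R R) (p : R) :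
    quotientRule K δ (algebraMap R K p) = algebraMap R K (δ p) := by
  simpa using quotientRule_div (K := K) δ p (one_mem _)

theorem quotientRule_add (δ : Derivation A R R) (x y : K) :
    quotientRule K δ (x + y) = quotientRule K δ x + quotientRule K δ y := by
  obtain ⟨a, b, hb, rfl⟩ := IsFractionRing.div_surjective (A := R) x
  obtain ⟨c, d, hd, rfl⟩ := IsFractionRing.div_surjective (A := R) y
  have hFb := IsFractionRing.to_map_ne_zero_of_mem_nonZeroDivisors (K := K) hb
  have hFd := IsFractionRing.to_map_ne_zero_of_mem_nonZeroDivisors (K := K) hd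
  have hsum : algebraMap R K a / algebraMap R K b + algebraMap R K c / algebraMap R K d =
      algebraMap R K (a * d + c * b) / algebraMap R K (b * d) := by
    simp only [map_add, map_mul]; field_simp
  rw [hsum, quotientRule_div δ _ (mul_mem hb hd), quotientRule_div δ _ hb,
    quotientRule_div δ _ hd]
  simp only [map_add, leibniz, smul_eq_mul, map_mul]
  field_simp
  ring

theorem quotientRule_mul (δ : Derivation A R R) (x y : K) :
    quotientRule K δ (x * y) = x * quotientRule K δ y + quotientRule K δ x * y := by
  obtain ⟨a, b, hb, rfl⟩ := IsFractionRing.div_surjective (A := R) x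
  obtain ⟨c, d, hd, rfl⟩ := IsFractionRing.div_surjective (A := R) y
  have hFb := IsFractionRing.to_map_ne_zero_of_mem_nonZeroDivisors (K := K) hb
  have hFd := IsFractionRing.to_map_ne_zero_of_mem_nonZeroDivisors (K := K) hd
  have hprod : algebraMap R K a / algebraMap R K b * (algebraMap R K c / algebraMap R K d) =
      algebraMap R K (a * c) / algebraMap R K (b * d) := by
    simp only [map_mul]; field_simp
  rw [hprod, quotientRule_div δ _ (mul_mem hb hd), quotientRule_div δ _ hb,
    quotientRule_div δ _ hd]
  simp only [leibniz, smul_eq_mul, map_add, map_mul]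
  field_simp
  ring

variable [Algebra A K] [IsScalarTower A R K]

theorem quotientRule_smul (δ : Derivation A R R) (r : A) (x : K) :
    quotientRule K δ (r • x) = r • quotientRule K δ x := by
  obtain ⟨a, b, hb, rfl⟩ := IsFractionRing.div_surjective (A := R) x
  have hsmul :
      r • (algebraMap R K a / algebraMap R K b) = algebraMap R K (r • a) / algebraMap R K b := by
    rw [Algebra.smul_def, Algebra.smul_def, map_mul, IsScalarTower.algebraMap_apply A R K,
      mul_div_assoc]
  rw [hsmul, quotientRule_div δ _ hb, quotientRule_div δ _ hb, δ.map_smul,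
    Algebra.smul_def r (δ a), Algebra.smul_def r a, Algebra.smul_def r (_ / _ : K),
    IsScalarTower.algebraMap_apply A R K]
  simp only [map_mul]
  ring

variable (K) in
noncomputable def toFractionRing (δ : Derivation A R R) : Derivation A K K :=
  Derivation.mk' ⟨⟨quotientRule K δ, quotientRule_add δ⟩, quotientRule_smul δ⟩ fun x y => by
    simp only [LinearMap.coe_mk, AddHom.coe_mk, quotientRule_mul, smul_eq_mul]
    ring

@[simp]
theorem toFractionRing_algebraMap (δ : Derivation A R R) (p : R) :
    δ.toFractionRing K (algebraMap R K p) = algebraMap R K (δ p) :=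
  quotientRule_algebraMap δ p

theorem eq_toFractionRing_apply (δ : Derivation A R R) (Δ : K → K)
    (hmul : ∀ x y, Δ (x * y) = x * Δ y + Δ x * y)
    (hΔ : ∀ p, Δ (algebraMap R K p) = algebraMap R K (δ p)) (x : K) :
    Δ x = δ.toFractionRing K x := by
  obtain ⟨p, q, hq, rfl⟩ := IsFractionRing.div_surjective (A := R) x
  have hFq := IsFractionRing.to_map_ne_zero_of_mem_nonZeroDivisors (K := K) hq
  -- `Δ (p / q)` is forced by the Leibniz rule applied to `p = (p / q) * q`
  have hp := hmul (algebraMap R K p / algebraMap R K q) (algebraMap R K q)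
  rw [div_mul_cancel₀ _ hFq, hΔ, hΔ] at hp
  have hx : algebraMap R K p = algebraMap R K p / algebraMap R K q * algebraMap R K q :=
    (div_mul_cancel₀ _ hFq).symm
  change _ = quotientRule K δ _
  rw [quotientRule_div δ _ hq, eq_div_iff (pow_ne_zero 2 hFq)]
  linear_combination (-algebraMap R K q) * hp + algebraMap R K (δ q) * hx

theorem eq_toFractionRing (δ : Derivation A R R) (Δ : Derivation A K K)
    (hΔ : ∀ p, Δ (algebraMap R K p) = algebraMap R K (δ p)) : Δ = δ.toFractionRing K :=
  ext <| eq_toFractionRing_apply δ Δ (fun x y => by rw [leibniz, smul_eq_mul, smul_eq_mul]; ring) hΔ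

end FractionRing

end Derivation

namespace MvPolynomial

variable {σ R : Type*} [CommRing R]

theorem intDerivation_ext {M : Type*} [AddCommGroup M] [Module (MvPolynomial σ R) M]
    {D₁ D₂ : Derivation ℤ (MvPolynomial σ R) M} (hC : ∀ a, D₁ (C a) = D₂ (C a))
    (hX : ∀ i, D₁ (X i) = D₂ (X i)) : D₁ = D₂ := by
  ext p
  induction p using MvPolynomial.induction_on with
  | C a => exact hC a
  | add p q hp hq => rw [map_add, map_add, hp, hq]
  | mul_X p i hp => rw [Derivation.leibniz, Derivation.leibniz, hp, hX]

theorem pderiv_commutator_pderiv (v w : σ) :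
    ⁅pderiv (R := R) v, pderiv (R := R) w⁆ = 0 := by
  classical
  refine derivation_ext fun i => ?_
  simp [Derivation.commutator_apply, Pi.single_apply, apply_ite]

theorem pderiv_succ_commutator {ι : Type*} (dR : R → R)
    (δ : Derivation ℤ (MvPolynomial (ι × ℕ) R) (MvPolynomial (ι × ℕ) R))
    (hC : ∀ c, δ (C c) = C (dR c)) (hX : ∀ i j, δ (X (i, j)) = X (i, j + 1)) (i : ι) (j : ℕ) :
    ⁅(pderiv (R := R) (i, j + 1)).restrictScalars ℤ, δ⁆ = (pderiv (i, j)).restrictScalars ℤ := by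
  classical
  refine intDerivation_ext (fun c => ?_) fun ⟨i', j'⟩ => ?_
  · simp [Derivation.commutator_apply, hC]
  · simp only [Derivation.commutator_apply, Derivation.restrictScalars_apply, hX, pderiv_X,
      Pi.single_apply, Prod.mk.injEq, add_left_inj]
    split_ifs <;> simp

section FractionRing

variable (R) [IsDomain R] (K : Type*) [Field K] [Algebra (MvPolynomial σ R) K]
  [IsFractionRing (MvPolynomial σ R) K]

noncomputable def fracPderiv (v : σ) : Derivation ℤ K K :=
  ((pderiv (R := R) v).restrictScalars ℤ).toFractionRing K

variable {R K}

@[simp]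
theorem fracPderiv_algebraMap (v : σ) (p : MvPolynomial σ R) :
    fracPderiv R K v (algebraMap _ K p) = algebraMap _ K (pderiv v p) :=
  Derivation.toFractionRing_algebraMap _ p

theorem fracPderiv_commutator (v w : σ) : ⁅fracPderiv R K v, fracPderiv R K w⁆ = 0 := by
  have h₁ := Derivation.eq_toFractionRing 0 ⁅fracPderiv R K v, fracPderiv R K w⁆ fun p => by
    have := DFunLike.congr_fun (pderiv_commutator_pderiv (R := R) v w) p
    simp only [Derivation.commutator_apply, Derivation.zero_apply, sub_eq_zero] at this
    simp [Derivation.commutator_apply, this]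
  have h₀ := Derivation.eq_toFractionRing (K := K) (0 : Derivation ℤ (MvPolynomial σ R) _) 0
    fun p => by rw [Derivation.zero_apply, Derivation.zero_apply, map_zero]
  exact h₁.trans h₀.symm

end FractionRing

section JetVariables

variable {ι R : Type*} [CommRing R] [IsDomain R] {K : Type*} [Field K]
  [Algebra (MvPolynomial (ι × ℕ) R) K] [IsFractionRing (MvPolynomial (ι × ℕ) R) K]

theorem fracPderiv_succ_commutator (dR : R → R)
    (δ : Derivation ℤ (MvPolynomial (ι × ℕ) R) (MvPolynomial (ι × ℕ) R))
    (hC : ∀ c, δ (C c) = C (dR c)) (hX : ∀ i j, δ (X (i, j)) = X (i, j + 1)) (i : ι) (j : ℕ) :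
    ⁅fracPderiv R K (i, j + 1), δ.toFractionRing K⁆ = fracPderiv R K (i, j) :=
  Derivation.eq_toFractionRing _ _ fun p => by
    have := DFunLike.congr_fun (pderiv_succ_commutator dR δ hC hX i j) p
    simp only [Derivation.commutator_apply, Derivation.restrictScalars_apply] at this
    simp [Derivation.commutator_apply, ← this]

theorem exists_fracPderiv_eq_zero (x : K) :
    ∃ N : ℕ, ∀ (i : ι) j, N < j → fracPderiv R K (i, j) x = 0 := by
  classical
  obtain ⟨p, q, -, rfl⟩ := IsFractionRing.div_surjective (A := MvPolynomial (ι × ℕ) R) x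
  refine ⟨(p.vars ∪ q.vars).sup Prod.snd, fun i j hj => ?_⟩
  have hvars : (i, j) ∉ p.vars ∪ q.vars := fun hmem =>
    (Finset.le_sup (f := Prod.snd) hmem).not_gt hj
  rw [Finset.mem_union, not_or] at hvars
  simp [Derivation.leibniz_div, pderiv_eq_zero_of_notMem_vars hvars.1,
    pderiv_eq_zero_of_notMem_vars hvars.2]

end JetVariables

end MvPolynomial

theorem sigmaExt_self {K : Type*} [Zero K] [One K] (m : ℕ) (y : ℕ → K) : sigmaExt m y m = 1 := by
  simp [sigmaExt]

theorem Derivation.map_sigmaExt_eq_zero {K : Type*} [CommRing K] (δ : Derivation ℤ K K) {m : ℕ}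
    {y : ℕ → K} (hy : ∀ k < m, δ (y k) = 0) (t : ℤ) : δ (sigmaExt m y t) = 0 := by
  unfold sigmaExt
  split_ifs with h₁ h₂
  · exact map_zero δ
  · exact hy _ h₂
  · exact δ.map_one_eq_zero
  · exact map_zero δ

section SigmaSystem

variable {K : Type*} [Field K]

theorem Derivation.map_sigmaRHS (δ : Derivation ℤ K K) (c₀ c₁ c₂ : K) (m k : ℕ) {Y : ℤ → K}
    (hY : ∀ t, δ (Y t) = 0) (hc₁ : δ c₁ = 0) (hc₂ : δ c₂ = 0) :
    δ (sigmaRHS c₀ c₁ c₂ 0 m Y k) = (k + 1) * δ c₀ * Y (k + 1) := by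
  simp [sigmaRHS, hY, hc₁, hc₂]
  ring

variable {d : Derivation ℤ K K} {c₀ c₁ c₂ : K} {m : ℕ} {y : ℕ → K}

theorem IsSigmaSolution.apply_eq_of_commutator (hy : IsSigmaSolution d c₀ c₁ c₂ 0 m y)
    {δ δ' : Derivation ℤ K K} (hcomm : ⁅δ', d⁆ = δ) (hy' : ∀ k < m, δ' (y k) = 0)
    (hc₁ : δ' c₁ = 0) (hc₂ : δ' c₂ = 0) {k : ℕ} (hk : k < m) :
    δ (y k) = (k + 1) * δ' c₀ * sigmaExt m y (k + 1) := by
  rw [← hcomm, Derivation.commutator_apply, hy k hk, hy' k hk, map_zero, sub_zero,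
    δ'.map_sigmaRHS _ _ _ _ _ (δ'.map_sigmaExt_eq_zero hy') hc₁ hc₂]

theorem IsSigmaSolution.derivation_succ_eq_zero {ι : Type*}
    (hy : IsSigmaSolution d c₀ c₁ c₂ 0 m y)
    {D : ι × ℕ → Derivation ℤ K K} (hcomm : ∀ i j, ⁅D (i, j + 1), d⁆ = D (i, j))
    (hfin : ∀ x, ∃ N : ℕ, ∀ i j, N < j → D (i, j) x = 0) (hc₀ : ∀ i j, D (i, j + 2) c₀ = 0)
    (hc₁ : ∀ i j, D (i, j + 1) c₁ = 0) (hc₂ : ∀ i j, D (i, j + 1) c₂ = 0) :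
    ∀ k < m, ∀ i j, D (i, j + 1) (y k) = 0 := by
  choose N hN using fun k => hfin (y k)
  set M := (Finset.range m).sup N
  -- descend from the common order bound `M` of the `y k`, one order at a time
  suffices h : ∀ n, ∀ k < m, ∀ i j, M < j + 1 + n → D (i, j + 1) (y k) = 0 from
    fun k hk i j => h M k hk i j (by omega)
  intro n
  induction n with
  | zero =>
    intro k hk i j hj
    exact hN k i (j + 1) ((Finset.le_sup (Finset.mem_range.2 hk)).trans_lt hj)
  | succ n ih =>
    intro k hk i j hj
    rw [hy.apply_eq_of_commutator (hcomm i (j + 1)) (fun k hk => ih k hk i (j + 1) (by omega))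
      (hc₁ i (j + 1)) (hc₂ i (j + 1)) hk, hc₀, mul_zero, zero_mul]

theorem not_isSigmaSolution_of_commutator [CharZero K] {D : Fin 2 × ℕ → Derivation ℤ K K}
    (hcomm : ∀ i j, ⁅D (i, j + 1), d⁆ = D (i, j)) (hcomm₀ : ⁅D (0, 0), D (1, 0)⁆ = 0)
    (hfin : ∀ x, ∃ N : ℕ, ∀ i j, N < j → D (i, j) x = 0) (hc₀ : ∀ i j, D (i, j + 2) c₀ = 0)
    (hc₁ : ∀ i j, D (i, j + 1) c₁ = 0) (hc₂ : ∀ i j, D (i, j + 1) c₂ = 0)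
    (h₀₁ : D (0, 1) c₀ = 0) {u : K} (h₁₁ : D (1, 1) c₀ = -u) (hu : D (0, 0) u = 1)
    (hm : 1 ≤ m) : ¬ IsSigmaSolution d c₀ c₁ c₂ 0 m y := by
  intro hy
  have hkill := hy.derivation_succ_eq_zero hcomm hfin hc₀ hc₁ hc₂
  have hk : m - 1 < m := by omega
  have hlast : sigmaExt m y ((m - 1 : ℕ) + 1) = 1 := by
    rw [show ((m - 1 : ℕ) : ℤ) + 1 = m by omega, sigmaExt_self]
  have h₁ := hy.apply_eq_of_commutator (hcomm 1 0) (fun k hk => hkill k hk 1 0) (hc₁ 1 0)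
    (hc₂ 1 0) hk
  have h₀ := hy.apply_eq_of_commutator (hcomm 0 0) (fun k hk => hkill k hk 0 0) (hc₁ 0 0)
    (hc₂ 0 0) hk
  rw [h₁₁, hlast, mul_one] at h₁
  rw [h₀₁, mul_zero, zero_mul] at h₀
  have hmixed := DFunLike.congr_fun hcomm₀ (y (m - 1))
  simp only [Derivation.commutator_apply, h₀, h₁, map_zero, Derivation.zero_apply,
    Derivation.leibniz, map_neg, hu, Derivation.map_natCast, map_add, Derivation.map_one_eq_zero,
    smul_eq_mul] at hmixed
  exact Nat.cast_add_one_ne_zero (R := K) (m - 1) (by linear_combination -hmixed)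

end SigmaSystem

theorem no_sigma_solutions_over_E_r1_r2_general
    {E : Type*} [Field E] [CharZero E] (dE : E → E)
    (a1p a2p a3p a1m a2m a3m a10 a20 : E)
    (D : MvPolynomial (Fin 2 × ℕ) E → MvPolynomial (Fin 2 × ℕ) E)
    (hD_add : ∀ p q, D (p + q) = D p + D q)
    (hD_mul : ∀ p q, D (p * q) = p * D q + D p * q)
    (hD_C : ∀ c : E, D (MvPolynomial.C c) = MvPolynomial.C (dE c))
    (hD_X : ∀ (i : Fin 2) (j : ℕ), D (X (i, j)) = X (i, j + 1))
    (DK : FractionRing (MvPolynomial (Fin 2 × ℕ) E) →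
          FractionRing (MvPolynomial (Fin 2 × ℕ) E))
    (hDK_mul : ∀ x y, DK (x * y) = x * DK y + DK x * y)
    (hDK_compat : ∀ p : MvPolynomial (Fin 2 × ℕ) E, DK (toFrac p) = toFrac (D p)) :
    ∀ m : ℕ, 1 ≤ m → ∀ y : ℕ → FractionRing (MvPolynomial (Fin 2 × ℕ) E),
      ¬ IsSigmaSolution DK
        (toFrac (MvPolynomial.C a1m) * toFrac (X ((1 : Fin 2), 0)) +
          toFrac (MvPolynomial.C a3m) -
          toFrac (X ((0 : Fin 2), 0)) * (toFrac (MvPolynomial.C a2m) +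
            (toFrac (MvPolynomial.C a20) - toFrac (MvPolynomial.C a10)) *
              toFrac (X ((1 : Fin 2), 0))) +
          toFrac (X ((0 : Fin 2), 0)) * toFrac (X ((1 : Fin 2), 0)) *
            (toFrac (MvPolynomial.C a2p) * toFrac (X ((1 : Fin 2), 0)) -
              toFrac (MvPolynomial.C a20)) -
          toFrac (X ((0 : Fin 2), 0)) * toFrac (X ((1 : Fin 2), 1)))
        (toFrac (MvPolynomial.C a3p) * toFrac (X ((0 : Fin 2), 0)) *
            toFrac (X ((1 : Fin 2), 0)) -
          toFrac (MvPolynomial.C a2p) * toFrac (X ((1 : Fin 2), 0)) -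
          toFrac (MvPolynomial.C a1p) * toFrac (X ((0 : Fin 2), 0)) +
          toFrac (MvPolynomial.C a10) + toFrac (MvPolynomial.C a20))
        (- toFrac (MvPolynomial.C a3p))
        0 m y := by
  intro m hm y
  let δ := Derivation.ofAddLeibniz D hD_add hD_mul
  have hDK : DK = δ.toFractionRing _ := funext (δ.eq_toFractionRing_apply DK hDK_mul hDK_compat)
  rw [hDK]
  refine not_isSigmaSolution_of_commutator (D := fracPderiv E _) (u := toFrac (X (0, 0)))
    (fracPderiv_succ_commutator dE δ hD_C hD_X) (fracPderiv_commutator _ _)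
    exists_fracPderiv_eq_zero ?_ ?_ ?_ ?_ ?_ ?_ hm
  all_goals simp [toFrac]

/-- **No solutions of `Σ_m` over `E⟨r₁, r₂⟩` (Lemma 7.5).**
Let `E` be a differential field of characteristic zero with derivation `dE`, elements
`a₁⁺, a₂⁺, a₃⁺, a₁⁻, a₂⁻, a₃⁻, a₁⁰, a₂⁰ ∈ E`, and let `K = E⟨r₁, r₂⟩` be the fraction field
of the differential polynomial ring `E{r₁, r₂}` (modelled as `MvPolynomial (Fin 2 × ℕ) E`
with `X (i, j)` playing the role of `r_{i+1}^{(j)}`), with `D` the unique derivation of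
`E{r₁, r₂}` extending `dE` and `DK` its unique extension to `K`.  With
`c₃ = 0`, `c₂ = −a₃⁺`, `c₁ = a₃⁺r₁r₂ − a₂⁺r₂ − a₁⁺r₁ + a₁⁰ + a₂⁰` and
`c₀ = a₁⁻r₂ + a₃⁻ − r₁(a₂⁻ + (a₂⁰ − a₁⁰)r₂) + r₁r₂(a₂⁺r₂ − a₂⁰) − r₁r₂'`,
for every positive integer `m` the system `Σ_m` has no solution in `K^m`. -/
theorem no_sigma_solutions_over_E_r1_r2
    {E : Type*} [Field E] [CharZero E] (dE : E → E)
    (hdE_add : ∀ a b : E, dE (a + b) = dE a + dE b)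
    (hdE_mul : ∀ a b : E, dE (a * b) = a * dE b + dE a * b)
    (a1p a2p a3p a1m a2m a3m a10 a20 : E)
    (D : MvPolynomial (Fin 2 × ℕ) E → MvPolynomial (Fin 2 × ℕ) E)
    (hD_add : ∀ p q, D (p + q) = D p + D q)
    (hD_mul : ∀ p q, D (p * q) = p * D q + D p * q)
    (hD_C : ∀ c : E, D (MvPolynomial.C c) = MvPolynomial.C (dE c))
    (hD_X : ∀ (i : Fin 2) (j : ℕ), D (X (i, j)) = X (i, j + 1))
    (DK : FractionRing (MvPolynomial (Fin 2 × ℕ) E) →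
          FractionRing (MvPolynomial (Fin 2 × ℕ) E))
    (hDK_add : ∀ x y, DK (x + y) = DK x + DK y)
    (hDK_mul : ∀ x y, DK (x * y) = x * DK y + DK x * y)
    (hDK_compat : ∀ p : MvPolynomial (Fin 2 × ℕ) E, DK (toFrac p) = toFrac (D p)) :
    ∀ m : ℕ, 1 ≤ m → ∀ y : ℕ → FractionRing (MvPolynomial (Fin 2 × ℕ) E),
      ¬ IsSigmaSolution DK
        (toFrac (MvPolynomial.C a1m) * toFrac (X ((1 : Fin 2), 0)) +
          toFrac (MvPolynomial.C a3m) -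
          toFrac (X ((0 : Fin 2), 0)) * (toFrac (MvPolynomial.C a2m) +
            (toFrac (MvPolynomial.C a20) - toFrac (MvPolynomial.C a10)) *
              toFrac (X ((1 : Fin 2), 0))) +
          toFrac (X ((0 : Fin 2), 0)) * toFrac (X ((1 : Fin 2), 0)) *
            (toFrac (MvPolynomial.C a2p) * toFrac (X ((1 : Fin 2), 0)) -
              toFrac (MvPolynomial.C a20)) -
          toFrac (X ((0 : Fin 2), 0)) * toFrac (X ((1 : Fin 2), 1)))
        (toFrac (MvPolynomial.C a3p) * toFrac (X ((0 : Fin 2), 0)) *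
            toFrac (X ((1 : Fin 2), 0)) -
          toFrac (MvPolynomial.C a2p) * toFrac (X ((1 : Fin 2), 0)) -
          toFrac (MvPolynomial.C a1p) * toFrac (X ((0 : Fin 2), 0)) +
          toFrac (MvPolynomial.C a10) + toFrac (MvPolynomial.C a20))
        (- toFrac (MvPolynomial.C a3p))
        0 m y :=
  no_sigma_solutions_over_E_r1_r2_general dE a1p a2p a3p a1m a2m a3m a10 a20 D hD_add hD_mul hD_C
    hD_X DK hDK_mul hDK_compat
end

section
/- Let E be a differential field of characteristic zero and let a₁⁺, a₂⁺, a₃⁺, a₁⁻, a₂⁻, a₃⁻, a₁⁰, a₂⁰ ∈ E. Let r₁, r₂ be differential indeterminates over E and K = E⟨r₁, r₂⟩ the fraction field of the differential polynomial ring E{r₁, r₂}. Consider the differential polynomial f = y' − a₃⁺y² + (a₃⁺r₁r₂ − a₂⁺r₂ − a₁⁺r₁ + a₁⁰ + a₂⁰)y + a₁⁻r₂ + a₃⁻ − r₁(a₂⁻ + (a₂⁰ − a₁⁰)r₂) + r₁r₂(a₂⁺r₂ − a₂⁰) − r₁r₂' in K{y}. Then the differential ideal [f] generated by f is a maximal differential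 ideal of K{y}: [f] is proper, and every differential ideal of K{y} strictly containing [f] equals K{y}. -/
open MvPolynomial

namespace SL3Aux

/-- A function satisfying additivity and the Leibniz rule. -/
def IsDerivFn {A : Type*} [CommRing A] (d : A → A) : Prop :=
  (∀ x y, d (x + y) = d x + d y) ∧ (∀ x y, d (x * y) = x * d y + d x * y)

variable {A : Type*} [CommRing A]

theorem IsDerivFn.zero {d : A → A} (hd : IsDerivFn d) : d 0 = 0 := by
  have := hd.1 0 0
  simp only [add_zero] at this
  exact (left_eq_add.mp this)

theorem IsDerivFn.one {d : A → A} (hd : IsDerivFn d) : d 1 = 0 := by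
  have := hd.2 1 1
  simp only [mul_one, one_mul] at this
  exact (left_eq_add.mp this)

theorem IsDerivFn.neg {d : A → A} (hd : IsDerivFn d) (x : A) : d (-x) = -d x := by
  have h := hd.1 x (-x)
  rw [add_neg_cancel, hd.zero] at h
  linear_combination -h

theorem IsDerivFn.sub {d : A → A} (hd : IsDerivFn d) (x y : A) : d (x - y) = d x - d y := by
  rw [sub_eq_add_neg, hd.1, hd.neg, sub_eq_add_neg]

theorem IsDerivFn.natCast {d : A → A} (hd : IsDerivFn d) (n : ℕ) : d (n : A) = 0 := by
  induction n with
  | zero => simpa using hd.zero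
  | succ k ih => push_cast; rw [hd.1, ih, hd.one, add_zero]

theorem IsDerivFn.sum {d : A → A} (hd : IsDerivFn d) {ι : Type*} (s : Finset ι) (f : ι → A) :
    d (∑ i ∈ s, f i) = ∑ i ∈ s, d (f i) := by
  classical
  induction s using Finset.induction_on with
  | empty => simpa using hd.zero
  | insert _ _ h ih => rw [Finset.sum_insert h, Finset.sum_insert h, hd.1, ih]

/-- Commutator of two derivation functions is a derivation function. -/
theorem IsDerivFn.commutator {d₁ d₂ : A → A} (h₁ : IsDerivFn d₁) (h₂ : IsDerivFn d₂) :
    IsDerivFn (fun x => d₁ (d₂ x) - d₂ (d₁ x)) := by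
  constructor
  · intro x y; simp only [h₁.1, h₂.1]; ring
  · intro x y
    simp only [h₁.2, h₂.2, h₁.1, h₂.1]
    ring

/-- Two derivation functions on a multivariate polynomial ring agreeing on constants
and variables agree everywhere. -/
theorem IsDerivFn.mv_ext {R σ : Type*} [CommRing R]
    {d₁ d₂ : MvPolynomial σ R → MvPolynomial σ R}
    (h₁ : IsDerivFn d₁) (h₂ : IsDerivFn d₂)
    (hC : ∀ c : R, d₁ (C c) = d₂ (C c)) (hX : ∀ s : σ, d₁ (X s) = d₂ (X s)) :
    ∀ p, d₁ p = d₂ p := by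
  intro p
  induction p using MvPolynomial.induction_on with
  | C c => exact hC c
  | add p q hp hq => rw [h₁.1, h₂.1, hp, hq]
  | mul_X p s hp => rw [h₁.2, h₂.2, hp, hX]

section Frac

variable {R : Type*} [CommRing R] [IsDomain R]

local notation "K" => FractionRing R
local notation "φ" => algebraMap R (FractionRing R)

theorem exists_rep (z : K) : ∃ p q : R, q ≠ 0 ∧ z * φ q = φ p := by
  obtain ⟨⟨p, q⟩, h⟩ := IsLocalization.surj (nonZeroDivisors R) z
  exact ⟨p, q, nonZeroDivisors.ne_zero q.2, h⟩

theorem algebraMap_ne_zero {q : R} (hq : q ≠ 0) : φ q ≠ 0 := by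
  intro h
  exact hq (IsFractionRing.injective R K (by simpa using h))

/-- Two derivation functions on the fraction field agreeing on the image of `R` agree. -/
theorem IsDerivFn.frac_ext {d₁ d₂ : K → K} (h₁ : IsDerivFn d₁) (h₂ : IsDerivFn d₂)
    (h : ∀ x : R, d₁ (φ x) = d₂ (φ x)) : ∀ z, d₁ z = d₂ z := by
  intro z
  obtain ⟨p, q, hq, hz⟩ := exists_rep z
  have hQ : φ q ≠ 0 := algebraMap_ne_zero hq
  have e1 : d₁ (z * φ q) = z * d₁ (φ q) + d₁ z * φ q := h₁.2 z (φ q)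
  have e2 : d₂ (z * φ q) = z * d₂ (φ q) + d₂ z * φ q := h₂.2 z (φ q)
  rw [hz, h p] at e1
  rw [hz] at e2
  rw [h q] at e1
  have : d₁ z * φ q = d₂ z * φ q := by linear_combination e2 - e1
  exact mul_right_cancel₀ hQ this

/-- A derivation function on the fraction field compatible with a derivation `d` on `R`
kills any fraction whose numerator and denominator are killed by `d`. -/
theorem fracDeriv_eq_zero {D : K → K} (hD : IsDerivFn D) {d : R → R}
    (hcompat : ∀ x : R, D (φ x) = φ (d x)) {z : K} {p q : R} (hq : q ≠ 0)
    (hz : z * φ q = φ p) (hp0 : d p = 0) (hq0 : d q = 0) : D z = 0 := by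
  have hQ : φ q ≠ 0 := algebraMap_ne_zero hq
  have e : D (z * φ q) = z * D (φ q) + D z * φ q := hD.2 z (φ q)
  rw [hz, hcompat p, hcompat q, hp0, hq0, map_zero, mul_zero, zero_add] at e
  rcases mul_eq_zero.mp e.symm with h | h
  · exact h
  · exact absurd h hQ

/-- Extension of a derivation on `R` to its fraction field. -/
theorem exists_fracDeriv (d : R → R) (hd : IsDerivFn d) :
    ∃ D : K → K, IsDerivFn D ∧ ∀ x : R, D (φ x) = φ (d x) := by
  classical
  set M := nonZeroDivisors R
  have hsec : ∀ z : K, z * φ ((IsLocalization.sec M z).2 : R) = φ (IsLocalization.sec M z).1 :=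
    fun z => IsLocalization.sec_spec M z
  have hsecne : ∀ z : K, ((IsLocalization.sec M z).2 : R) ≠ 0 :=
    fun z => nonZeroDivisors.ne_zero (IsLocalization.sec M z).2.2
  set D : K → K := fun z =>
    (φ (d (IsLocalization.sec M z).1) - z * φ (d ((IsLocalization.sec M z).2 : R))) *
      (φ ((IsLocalization.sec M z).2 : R))⁻¹ with hDdef
  have key : ∀ (z : K) (p q : R), q ≠ 0 → z * φ q = φ p →
      D z = (φ (d p) - z * φ (d q)) * (φ q)⁻¹ := by
    intro z p q hq hz
    set p₀ := (IsLocalization.sec M z).1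
    set q₀ : R := ((IsLocalization.sec M z).2 : R)
    have hz₀ : z * φ q₀ = φ p₀ := hsec z
    have hq₀ : q₀ ≠ 0 := hsecne z
    have hQ : φ q ≠ 0 := algebraMap_ne_zero hq
    have hQ₀ : φ q₀ ≠ 0 := algebraMap_ne_zero hq₀
    have cross : p * q₀ = p₀ * q := by
      apply IsFractionRing.injective R K
      rw [map_mul, map_mul, ← hz, ← hz₀]
      ring
    have dcross : p * d q₀ + d p * q₀ = p₀ * d q + d p₀ * q := by
      rw [← hd.2, ← hd.2, cross]
    have dcrossK : φ p * φ (d q₀) + φ (d p) * φ q₀ = φ p₀ * φ (d q) + φ (d p₀) * φ q := by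
      rw [← map_mul, ← map_mul, ← map_mul, ← map_mul, ← map_add, ← map_add, dcross]
    rw [← hz, ← hz₀] at dcrossK
    have main : (φ (d p₀) - z * φ (d q₀)) * φ q = (φ (d p) - z * φ (d q)) * φ q₀ := by
      linear_combination -dcrossK
    rw [hDdef]
    dsimp only
    rw [← div_eq_mul_inv, ← div_eq_mul_inv, div_eq_div_iff hQ₀ hQ]
    linear_combination main
  refine ⟨D, ⟨?_, ?_⟩, ?_⟩
  · intro z₁ z₂
    obtain ⟨p₁, q₁, hq₁, hz₁⟩ := exists_rep z₁
    obtain ⟨p₂, q₂, hq₂, hz₂⟩ := exists_rep z₂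
    have hq : q₁ * q₂ ≠ 0 := mul_ne_zero hq₁ hq₂
    have hz : (z₁ + z₂) * φ (q₁ * q₂) = φ (p₁ * q₂ + p₂ * q₁) := by
      rw [map_mul, map_add, map_mul, map_mul]
      rw [← hz₁, ← hz₂]; ring
    rw [key _ _ _ hq hz, key _ _ _ hq₁ hz₁, key _ _ _ hq₂ hz₂]
    have e1 : d (p₁ * q₂ + p₂ * q₁) = p₁ * d q₂ + d p₁ * q₂ + (p₂ * d q₁ + d p₂ * q₁) := by
      rw [hd.1, hd.2, hd.2]
    have e2 : d (q₁ * q₂) = q₁ * d q₂ + d q₁ * q₂ := hd.2 q₁ q₂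
    have hQ₁ : φ q₁ ≠ 0 := algebraMap_ne_zero hq₁
    have hQ₂ : φ q₂ ≠ 0 := algebraMap_ne_zero hq₂
    have hz₁' : z₁ = φ p₁ / φ q₁ := (eq_div_iff hQ₁).mpr hz₁
    have hz₂' : z₂ = φ p₂ / φ q₂ := (eq_div_iff hQ₂).mpr hz₂
    rw [e1, e2]
    push_cast [map_add, map_mul]
    rw [hz₁', hz₂']
    field_simp
    ring
  · intro z₁ z₂
    obtain ⟨p₁, q₁, hq₁, hz₁⟩ := exists_rep z₁
    obtain ⟨p₂, q₂, hq₂, hz₂⟩ := exists_rep z₂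
    have hq : q₁ * q₂ ≠ 0 := mul_ne_zero hq₁ hq₂
    have hz : (z₁ * z₂) * φ (q₁ * q₂) = φ (p₁ * p₂) := by
      rw [map_mul, map_mul]
      rw [← hz₁, ← hz₂]; ring
    rw [key _ _ _ hq hz, key _ _ _ hq₁ hz₁, key _ _ _ hq₂ hz₂]
    have e1 : d (p₁ * p₂) = p₁ * d p₂ + d p₁ * p₂ := hd.2 p₁ p₂
    have e2 : d (q₁ * q₂) = q₁ * d q₂ + d q₁ * q₂ := hd.2 q₁ q₂
    have hQ₁ : φ q₁ ≠ 0 := algebraMap_ne_zero hq₁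
    have hQ₂ : φ q₂ ≠ 0 := algebraMap_ne_zero hq₂
    have hz₁' : z₁ = φ p₁ / φ q₁ := (eq_div_iff hQ₁).mpr hz₁
    have hz₂' : z₂ = φ p₂ / φ q₂ := (eq_div_iff hQ₂).mpr hz₂
    rw [e1, e2]
    push_cast [map_add, map_mul]
    rw [hz₁', hz₂']
    field_simp
    ring
  · intro x
    have hz : φ x * φ (1 : R) = φ x := by rw [map_one, mul_one]
    rw [key _ _ _ one_ne_zero hz, hd.one, map_zero, mul_zero, sub_zero, map_one, inv_one,
      mul_one]

end Frac

section Poly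

variable {K : Type*} [Field K] (dK : K → K) (w : Polynomial K)

/-- Coefficientwise application of `dK`. -/
noncomputable def coeffD (p : Polynomial K) : Polynomial K :=
  ∑ k ∈ p.support, Polynomial.C (dK (p.coeff k)) * Polynomial.X ^ k

/-- The derivation on `K[Y]` extending `dK` with `Y' = w`. -/
noncomputable def delta (p : Polynomial K) : Polynomial K :=
  coeffD dK p + Polynomial.derivative p * w

variable {dK}

theorem coeff_coeffD (hd : IsDerivFn dK) (p : Polynomial K) (m : ℕ) :
    (coeffD dK p).coeff m = dK (p.coeff m) := by
  classical
  rw [coeffD, Polynomial.finset_sum_coeff]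
  simp only [Polynomial.coeff_C_mul, Polynomial.coeff_X_pow, mul_ite, mul_one, mul_zero]
  rw [Finset.sum_ite_eq]
  split
  · rfl
  · next h => rw [Polynomial.notMem_support_iff.mp h, hd.zero]

theorem coeff_delta (hd : IsDerivFn dK) (p : Polynomial K) (m : ℕ) :
    (delta dK w p).coeff m = dK (p.coeff m) + (Polynomial.derivative p * w).coeff m := by
  rw [delta, Polynomial.coeff_add, coeff_coeffD hd]

theorem coeffD_add (hd : IsDerivFn dK) (p q : Polynomial K) :
    coeffD dK (p + q) = coeffD dK p + coeffD dK q := by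
  ext m
  rw [Polynomial.coeff_add, coeff_coeffD hd, coeff_coeffD hd, coeff_coeffD hd,
    Polynomial.coeff_add, hd.1]

theorem coeffD_mul (hd : IsDerivFn dK) (p q : Polynomial K) :
    coeffD dK (p * q) = p * coeffD dK q + coeffD dK p * q := by
  ext m
  rw [Polynomial.coeff_add, coeff_coeffD hd, Polynomial.coeff_mul, Polynomial.coeff_mul,
    Polynomial.coeff_mul, hd.sum, ← Finset.sum_add_distrib]
  refine Finset.sum_congr rfl fun x _ => ?_
  rw [hd.2, coeff_coeffD hd, coeff_coeffD hd]

theorem delta_isDerivFn (hd : IsDerivFn dK) : IsDerivFn (delta dK w) := by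
  constructor
  · intro p q
    rw [delta, delta, delta, coeffD_add hd, map_add]
    ring
  · intro p q
    rw [delta, delta, delta, coeffD_mul hd, Polynomial.derivative_mul]
    ring

theorem delta_C (hd : IsDerivFn dK) (c : K) :
    delta dK w (Polynomial.C c) = Polynomial.C (dK c) := by
  ext m
  rw [coeff_delta w hd, Polynomial.derivative_C, zero_mul, Polynomial.coeff_zero, add_zero]
  rcases m with _ | m
  · simp
  · simp [hd.zero]

theorem delta_X (hd : IsDerivFn dK) : delta dK w Polynomial.X = w := by
  have h0 : coeffD dK (Polynomial.X : Polynomial K) = 0 := by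
    ext m
    rw [coeff_coeffD hd, Polynomial.coeff_X, Polynomial.coeff_zero]
    split
    · exact hd.one
    · exact hd.zero
  rw [delta, h0, zero_add, Polynomial.derivative_X, one_mul]

end Poly


section Pi

variable {K : Type*} [Field K] (dK : K → K) (a' c₁ c₀ : K)

/-- `w = a'Y² - c₁Y - c₀`. -/
noncomputable def wpoly : Polynomial K :=
  Polynomial.C a' * Polynomial.X ^ 2 - Polynomial.C c₁ * Polynomial.X - Polynomial.C c₀

/-- The differential polynomial `f`. -/
noncomputable def fpoly : MvPolynomial ℕ K :=
  X 1 - C a' * X 0 ^ 2 + C c₁ * X 0 + C c₀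

/-- `gseq j` is the image of `y⁽ʲ⁾` in `K[Y]`. -/
noncomputable def gseq : ℕ → Polynomial K
  | 0 => Polynomial.X
  | (j+1) => delta dK (wpoly a' c₁ c₀) (gseq j)

/-- The projection `K{y} → K[Y]`. -/
noncomputable def piHom : MvPolynomial ℕ K →+* Polynomial K :=
  eval₂Hom (Polynomial.C : K →+* Polynomial K) (gseq dK a' c₁ c₀)

/-- The section `K[Y] → K{y}`, `Y ↦ y`. -/
noncomputable def LHom : Polynomial K →+* MvPolynomial ℕ K :=
  Polynomial.eval₂RingHom (MvPolynomial.C : K →+* MvPolynomial ℕ K) (X 0)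

theorem piHom_C (c : K) : piHom dK a' c₁ c₀ (C c) = Polynomial.C c := by
  simp [piHom]

theorem piHom_X (j : ℕ) : piHom dK a' c₁ c₀ (X j) = gseq dK a' c₁ c₀ j := by
  simp [piHom]

theorem LHom_C (c : K) : LHom (Polynomial.C c) = (C c : MvPolynomial ℕ K) := by
  simp [LHom]

theorem LHom_X : LHom (Polynomial.X : Polynomial K) = X 0 := by
  simp [LHom]

theorem piHom_LHom (q : Polynomial K) : piHom dK a' c₁ c₀ (LHom q) = q := by
  have h : (piHom dK a' c₁ c₀).comp LHom = RingHom.id (Polynomial K) := by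
    apply Polynomial.ringHom_ext
    · intro c
      simp [RingHom.comp_apply, LHom_C, piHom_C]
    · simp [RingHom.comp_apply, LHom_X, piHom_X, gseq]
  calc piHom dK a' c₁ c₀ (LHom q) = ((piHom dK a' c₁ c₀).comp LHom) q := rfl
  _ = q := by rw [h]; rfl

theorem piHom_surjective : Function.Surjective (piHom dK a' c₁ c₀) :=
  fun q => ⟨LHom q, piHom_LHom dK a' c₁ c₀ q⟩

variable {dK}
variable {Dy : MvPolynomial ℕ K → MvPolynomial ℕ K}

theorem piHom_Dy (hdK : IsDerivFn dK) (hDy : IsDerivFn Dy)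
    (hDy_C : ∀ c : K, Dy (C c) = C (dK c)) (hDy_X : ∀ j : ℕ, Dy (X j) = X (j + 1)) (s) :
    piHom dK a' c₁ c₀ (Dy s) = delta dK (wpoly a' c₁ c₀) (piHom dK a' c₁ c₀ s) := by
  induction s using MvPolynomial.induction_on with
  | C c => rw [hDy_C, piHom_C, piHom_C, delta_C _ hdK]
  | add p q hp hq => rw [hDy.1, map_add, map_add, hp, hq, (delta_isDerivFn _ hdK).1]
  | mul_X p n hp =>
      rw [hDy.2, hDy_X, map_add, map_mul, map_mul, hp, map_mul, piHom_X, piHom_X,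
        (delta_isDerivFn _ hdK).2]
      rfl

theorem piHom_f (hdK : IsDerivFn dK) :
    piHom dK a' c₁ c₀ (fpoly a' c₁ c₀) = 0 := by
  rw [fpoly]
  rw [map_add, map_add, map_sub, map_mul, map_mul, map_pow, piHom_X, piHom_X, piHom_C,
    piHom_C, piHom_C]
  have h1 : gseq dK a' c₁ c₀ 1 = wpoly a' c₁ c₀ := by
    show delta dK (wpoly a' c₁ c₀) (gseq dK a' c₁ c₀ 0) = wpoly a' c₁ c₀
    show delta dK (wpoly a' c₁ c₀) Polynomial.X = wpoly a' c₁ c₀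
    exact delta_X _ hdK
  rw [h1]
  show wpoly a' c₁ c₀ - Polynomial.C a' * Polynomial.X ^ 2 + Polynomial.C c₁ * Polynomial.X
      + Polynomial.C c₀ = 0
  rw [wpoly]; ring

theorem LHom_wpoly : LHom (wpoly a' c₁ c₀) =
    C a' * X 0 ^ 2 - C c₁ * X 0 - C c₀ := by
  rw [wpoly, map_sub, map_sub, map_mul, map_mul, map_pow, LHom_C, LHom_C, LHom_C, LHom_X]

theorem Phi_mem (hdK : IsDerivFn dK) (hDy : IsDerivFn Dy)
    (hDy_C : ∀ c : K, Dy (C c) = C (dK c)) (hDy_X : ∀ j : ℕ, Dy (X j) = X (j + 1))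
    (T : Ideal (MvPolynomial ℕ K)) (hfT : fpoly a' c₁ c₀ ∈ T)
    (hT : ∀ x ∈ T, Dy x ∈ T) (q : Polynomial K) :
    Dy (LHom q) - LHom (delta dK (wpoly a' c₁ c₀) q) ∈ T := by
  have step : ∀ q : Polynomial K,
      Dy (LHom q) - LHom (delta dK (wpoly a' c₁ c₀) q) ∈ T →
      Dy (LHom (q * Polynomial.X)) -
        LHom (delta dK (wpoly a' c₁ c₀) (q * Polynomial.X)) ∈ T := by
    intro q hq
    have e1 : delta dK (wpoly a' c₁ c₀) (q * Polynomial.X) =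
        q * wpoly a' c₁ c₀ + delta dK (wpoly a' c₁ c₀) q * Polynomial.X := by
      rw [(delta_isDerivFn _ hdK).2, delta_X _ hdK]
    have e2 : Dy (LHom (q * Polynomial.X)) = LHom q * X 1 + Dy (LHom q) * X 0 := by
      rw [map_mul, LHom_X, hDy.2, hDy_X]
    have key : Dy (LHom (q * Polynomial.X)) -
        LHom (delta dK (wpoly a' c₁ c₀) (q * Polynomial.X)) =
        LHom q * fpoly a' c₁ c₀ +
          (Dy (LHom q) - LHom (delta dK (wpoly a' c₁ c₀) q)) * X 0 := by
      rw [e1, e2, map_add, map_mul, map_mul, LHom_wpoly, LHom_X, fpoly]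
      ring
    rw [key]
    exact add_mem (T.mul_mem_left _ hfT) (T.mul_mem_right _ hq)
  induction q using Polynomial.induction_on with
  | C c =>
      rw [LHom_C, hDy_C, delta_C _ hdK, LHom_C, sub_self]
      exact zero_mem T
  | add p q hp hq =>
      rw [map_add, hDy.1, (delta_isDerivFn _ hdK).1, map_add]
      have : Dy (LHom p) + Dy (LHom q) -
          (LHom (delta dK (wpoly a' c₁ c₀) p) + LHom (delta dK (wpoly a' c₁ c₀) q)) =
          (Dy (LHom p) - LHom (delta dK (wpoly a' c₁ c₀) p)) +
          (Dy (LHom q) - LHom (delta dK (wpoly a' c₁ c₀) q)) := by ring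
      rw [this]
      exact add_mem hp hq
  | monomial n c hc =>
      have e : Polynomial.C c * Polynomial.X ^ (n + 1) =
          (Polynomial.C c * Polynomial.X ^ n) * Polynomial.X := by ring
      rw [e]
      exact step _ hc

theorem X_sub_mem (hdK : IsDerivFn dK) (hDy : IsDerivFn Dy)
    (hDy_C : ∀ c : K, Dy (C c) = C (dK c)) (hDy_X : ∀ j : ℕ, Dy (X j) = X (j + 1))
    (T : Ideal (MvPolynomial ℕ K)) (hfT : fpoly a' c₁ c₀ ∈ T)
    (hT : ∀ x ∈ T, Dy x ∈ T) (i : ℕ) :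
    (X i : MvPolynomial ℕ K) - LHom (gseq dK a' c₁ c₀ i) ∈ T := by
  induction i with
  | zero =>
      show (X 0 : MvPolynomial ℕ K) - LHom Polynomial.X ∈ T
      rw [LHom_X, sub_self]; exact zero_mem T
  | succ i ih =>
      have h1 := hT _ ih
      rw [hDy.sub, hDy_X] at h1
      have h2 := Phi_mem a' c₁ c₀ hdK hDy hDy_C hDy_X T hfT hT (gseq dK a' c₁ c₀ i)
      have e : (X (i+1) : MvPolynomial ℕ K) - LHom (gseq dK a' c₁ c₀ (i+1)) =
          (X (i+1) - Dy (LHom (gseq dK a' c₁ c₀ i))) +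
          (Dy (LHom (gseq dK a' c₁ c₀ i)) -
            LHom (delta dK (wpoly a' c₁ c₀) (gseq dK a' c₁ c₀ i))) := by
        show _ = _
        have : gseq dK a' c₁ c₀ (i+1) = delta dK (wpoly a' c₁ c₀) (gseq dK a' c₁ c₀ i) := rfl
        rw [this]; ring
      rw [e]
      exact add_mem h1 h2

theorem sub_LHom_piHom_mem (hdK : IsDerivFn dK) (hDy : IsDerivFn Dy)
    (hDy_C : ∀ c : K, Dy (C c) = C (dK c)) (hDy_X : ∀ j : ℕ, Dy (X j) = X (j + 1))
    (T : Ideal (MvPolynomial ℕ K)) (hfT : fpoly a' c₁ c₀ ∈ T)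
    (hT : ∀ x ∈ T, Dy x ∈ T) (s : MvPolynomial ℕ K) :
    s - LHom (piHom dK a' c₁ c₀ s) ∈ T := by
  induction s using MvPolynomial.induction_on with
  | C c => rw [piHom_C, LHom_C, sub_self]; exact zero_mem T
  | add p q hp hq =>
      rw [map_add, map_add]
      have : p + q - (LHom (piHom dK a' c₁ c₀ p) + LHom (piHom dK a' c₁ c₀ q)) =
          (p - LHom (piHom dK a' c₁ c₀ p)) + (q - LHom (piHom dK a' c₁ c₀ q)) := by ring
      rw [this]
      exact add_mem hp hq
  | mul_X p n hp =>
      have hX := X_sub_mem a' c₁ c₀ hdK hDy hDy_C hDy_X T hfT hT n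
      have e : p * X n - LHom (piHom dK a' c₁ c₀ (p * X n)) =
          (p - LHom (piHom dK a' c₁ c₀ p)) * X n +
          LHom (piHom dK a' c₁ c₀ p) * (X n - LHom (gseq dK a' c₁ c₀ n)) := by
        rw [map_mul, piHom_X, map_mul]
        ring
      rw [e]
      exact add_mem (T.mul_mem_right _ hp) (T.mul_mem_left _ hX)

end Pi

section Simple

variable {K : Type*} [Field K] {dK : K → K} (a' c₁ c₀ : K)

theorem coeff_dp_mul_X (p : Polynomial K) (k : ℕ) :
    (Polynomial.derivative p * Polynomial.X).coeff k = p.coeff k * k := by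
  rcases k with _ | k
  · simp [Polynomial.mul_coeff_zero]
  · rw [Polynomial.coeff_mul_X, Polynomial.coeff_derivative]
    push_cast; ring

theorem coeff_dw (p : Polynomial K) (k : ℕ) :
    (Polynomial.derivative p * wpoly a' c₁ c₀).coeff (k + 1) =
      a' * (p.coeff k * k) - c₁ * (p.coeff (k+1) * (k+1)) - c₀ * (p.coeff (k+2) * (k+2)) := by
  have hw : Polynomial.derivative p * wpoly a' c₁ c₀ =
      Polynomial.C a' * (Polynomial.derivative p * Polynomial.X * Polynomial.X) -
      Polynomial.C c₁ * (Polynomial.derivative p * Polynomial.X) -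
      Polynomial.C c₀ * Polynomial.derivative p := by
    rw [wpoly]; ring
  rw [hw, Polynomial.coeff_sub, Polynomial.coeff_sub, Polynomial.coeff_C_mul,
    Polynomial.coeff_C_mul, Polynomial.coeff_C_mul, Polynomial.coeff_mul_X,
    coeff_dp_mul_X, coeff_dp_mul_X, Polynomial.coeff_derivative]
  push_cast; ring

theorem coeff_dw0 (p : Polynomial K) :
    (Polynomial.derivative p * wpoly a' c₁ c₀).coeff 0 = -(c₀ * p.coeff 1) := by
  have hw : Polynomial.derivative p * wpoly a' c₁ c₀ =
      Polynomial.C a' * (Polynomial.derivative p * Polynomial.X * Polynomial.X) -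
      Polynomial.C c₁ * (Polynomial.derivative p * Polynomial.X) -
      Polynomial.C c₀ * Polynomial.derivative p := by
    rw [wpoly]; ring
  rw [hw, Polynomial.coeff_sub, Polynomial.coeff_sub, Polynomial.coeff_C_mul,
    Polynomial.coeff_C_mul, Polynomial.coeff_C_mul, coeff_dp_mul_X,
    Polynomial.coeff_derivative, Polynomial.mul_coeff_zero, coeff_dp_mul_X]
  push_cast; ring

theorem coeff_CXp (γ : K) (p : Polynomial K) (k : ℕ) :
    (Polynomial.C γ * Polynomial.X * p).coeff (k + 1) = γ * p.coeff k := by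
  rw [mul_assoc, Polynomial.coeff_C_mul, Polynomial.coeff_X_mul]

theorem coeff_CXp0 (γ : K) (p : Polynomial K) :
    (Polynomial.C γ * Polynomial.X * p).coeff 0 = 0 := by
  simp [Polynomial.mul_coeff_zero]

/-- Differential simplicity of `(K[Y], delta)`, assuming the nonexistence of
algebraic-factor data (`hcore`). -/
theorem simple (hdK : IsDerivFn dK)
    (hcore : ∀ (t : ℕ) (pk : ℕ → K) (β : K), pk (t+1) = 1 →
      (∀ k, t+2 ≤ k → pk k = 0) →
      (dK (pk 0) - c₀ * pk 1 = β * pk 0) →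
      (∀ k : ℕ, dK (pk (k+1)) + a' * (pk k * k) - c₁ * (pk (k+1) * (k+1)) -
        c₀ * (pk (k+2) * (k+2)) = ((t:K)+1) * a' * pk k + β * pk (k+1)) → False)
    (J' : Ideal (Polynomial K)) (hJ' : ∀ x ∈ J', delta dK (wpoly a' c₁ c₀) x ∈ J')
    (hbot : J' ≠ ⊥) : J' = ⊤ := by
  obtain ⟨q₀, hq₀J, hq₀⟩ := (Submodule.ne_bot_iff J').mp hbot
  set Sdeg : Set ℕ := {d | ∃ q ∈ J', q ≠ 0 ∧ q.natDegree = d} with hSdeg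
  have hne : Sdeg.Nonempty := ⟨q₀.natDegree, q₀, hq₀J, hq₀, rfl⟩
  set n := sInf Sdeg with hn
  obtain ⟨q₁, hq₁J, hq₁ne, hq₁deg⟩ := Nat.sInf_mem hne
  set p := q₁ * Polynomial.C (q₁.leadingCoeff)⁻¹ with hp
  have hpJ : p ∈ J' := J'.mul_mem_right _ hq₁J
  have hpm : p.Monic := Polynomial.monic_mul_leadingCoeff_inv hq₁ne
  have hpdeg : p.natDegree = n := by
    rw [hp, Polynomial.natDegree_mul_C
      (inv_ne_zero (Polynomial.leadingCoeff_ne_zero.mpr hq₁ne))]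
    exact hq₁deg
  by_cases hn0 : n = 0
  · have hp1 : p = 1 := hpm.natDegree_eq_zero.mp (hpdeg.trans hn0)
    exact Ideal.eq_top_iff_one J' |>.mpr (hp1 ▸ hpJ)
  exfalso
  obtain ⟨t, ht⟩ := Nat.exists_eq_succ_of_ne_zero hn0
  -- the element q = δp - C(n a') X p
  set γ : K := (n : K) * a' with hγ
  set q : Polynomial K := delta dK (wpoly a' c₁ c₀) p - Polynomial.C γ * Polynomial.X * p
    with hq
  have hqJ : q ∈ J' := sub_mem (hJ' p hpJ) (J'.mul_mem_left _ hpJ)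
  have hcoeffp_top : p.coeff (t+1) = 1 := by
    have := hpm.coeff_natDegree
    rwa [hpdeg, ht] at this
  have hcoeffp_zero : ∀ k, t + 2 ≤ k → p.coeff k = 0 := by
    intro k hk
    apply Polynomial.coeff_eq_zero_of_natDegree_lt
    rw [hpdeg, ht]; omega
  have hqdeg : q.natDegree ≤ n := by
    rw [Polynomial.natDegree_le_iff_coeff_eq_zero]
    intro N hN
    obtain ⟨j, hj⟩ := Nat.exists_eq_add_of_lt hN
    rcases j with _ | j'
    · -- N = n + 1 = t + 2
      have hNt : N = t + 1 + 1 := by omega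
      subst hNt
      rw [hq, Polynomial.coeff_sub, coeff_delta _ hdK, coeff_dw, coeff_CXp]
      rw [hcoeffp_top, hcoeffp_zero (t+1+1) (by omega), hcoeffp_zero (t+1+2) (by omega),
        hdK.zero, hγ, ht]
      push_cast; ring
    · -- N ≥ n + 2
      have hNt : N = (t + 2 + j') + 1 := by omega
      subst hNt
      rw [hq, Polynomial.coeff_sub, coeff_delta _ hdK, coeff_dw, coeff_CXp]
      rw [hcoeffp_zero (t+2+j') (by omega), hcoeffp_zero (t+2+j'+1) (by omega),
        hcoeffp_zero (t+2+j'+2) (by omega), hdK.zero]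
      ring
  set β : K := q.coeff n with hβ
  set r : Polynomial K := q - Polynomial.C β * p with hr
  have hrJ : r ∈ J' := sub_mem hqJ (J'.mul_mem_left _ hpJ)
  have hrcoeff : ∀ m, n ≤ m → r.coeff m = 0 := by
    intro m hm
    rcases eq_or_lt_of_le hm with he | hlt
    · rw [hr, Polynomial.coeff_sub, Polynomial.coeff_C_mul, ← he]
      have : p.coeff n = 1 := by rw [← hpdeg]; exact hpm.coeff_natDegree
      rw [this, mul_one, ← hβ, sub_self]
    · rw [hr, Polynomial.coeff_sub, Polynomial.coeff_C_mul,
        Polynomial.coeff_eq_zero_of_natDegree_lt (lt_of_le_of_lt hqdeg hlt),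
        Polynomial.coeff_eq_zero_of_natDegree_lt (by omega : p.natDegree < m)]
      ring
  have hr0 : r = 0 := by
    by_contra hrne
    have hmem : r.natDegree ∈ Sdeg := ⟨r, hrJ, hrne, rfl⟩
    have hle : n ≤ r.natDegree := Nat.sInf_le hmem
    have : r.leadingCoeff = 0 := hrcoeff _ hle
    exact hrne (Polynomial.leadingCoeff_eq_zero.mp this)
  have hstar : delta dK (wpoly a' c₁ c₀) p =
      Polynomial.C γ * Polynomial.X * p + Polynomial.C β * p := by
    have h := hr0
    rw [hr, hq] at h
    linear_combination h
  -- coefficient equations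
  apply hcore t (fun k => p.coeff k) β hcoeffp_top hcoeffp_zero
  · have h0 := congrArg (fun s => Polynomial.coeff s 0) hstar
    simp only [Polynomial.coeff_add] at h0
    rw [coeff_delta _ hdK, coeff_dw0, coeff_CXp0, Polynomial.coeff_C_mul] at h0
    linear_combination h0
  · intro k
    have hk := congrArg (fun s => Polynomial.coeff s (k+1)) hstar
    simp only [Polynomial.coeff_add] at hk
    rw [coeff_delta _ hdK, coeff_dw, coeff_CXp, Polynomial.coeff_C_mul] at hk
    have hcast : γ = ((t:K)+1) * a' := by rw [hγ, ht]; push_cast; ring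
    rw [hcast] at hk
    linear_combination hk

end Simple

section Core

variable {E : Type*} [Field E] [CharZero E]

local notation "R'" => MvPolynomial (Fin 2 × ℕ) E
local notation "K'" => FractionRing (MvPolynomial (Fin 2 × ℕ) E)
local notation "φ'" => algebraMap (MvPolynomial (Fin 2 × ℕ) E)
  (FractionRing (MvPolynomial (Fin 2 × ℕ) E))

theorem pderiv_X_pair (u v : Fin 2 × ℕ) :
    pderiv u (X v : R') = if v = u then 1 else 0 := by
  rcases eq_or_ne v u with h | h
  · subst h; rw [if_pos rfl, pderiv_X_self]
  · rw [if_neg h, pderiv_X_of_ne h]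

theorem pderiv_isDerivFn (v : Fin 2 × ℕ) : IsDerivFn (fun y : R' => pderiv v y) := by
  constructor
  · intro a b; exact map_add _ a b
  · intro a b
    show pderiv v (a * b) = a * pderiv v b + pderiv v a * b
    rw [pderiv_mul]; ring

theorem pderiv_D_comm (dE : E → E) {D : R' → R'} (hD : IsDerivFn D)
    (hD_C : ∀ c, D (C c) = C (dE c)) (hD_X : ∀ (i : Fin 2) (j : ℕ), D (X (i,j)) = X (i,j+1))
    (i : Fin 2) (b : ℕ) (x : R') :
    pderiv (i, b+1) (D x) - D (pderiv (i, b+1) x) = pderiv (i, b) x := by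
  refine IsDerivFn.mv_ext ((pderiv_isDerivFn (i,b+1)).commutator hD) (pderiv_isDerivFn (i,b))
    ?_ ?_ x
  · intro c
    show pderiv (i,b+1) (D (C c)) - D (pderiv (i,b+1) (C c)) = pderiv (i,b) (C c)
    simp [hD_C, pderiv_C, hD.zero]
  · intro s
    obtain ⟨i', j'⟩ := s
    show pderiv (i,b+1) (D (X (i',j'))) - D (pderiv (i,b+1) (X (i',j'))) =
      pderiv (i,b) (X (i',j'))
    rw [hD_X, pderiv_X_pair, pderiv_X_pair, pderiv_X_pair]
    have hDif : D (if ((i',j') : Fin 2 × ℕ) = (i,b+1) then (1:R') else 0) = 0 := by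
      split
      · exact hD.one
      · exact hD.zero
    rw [hDif, sub_zero]
    have hiff : (((i',j'+1) : Fin 2 × ℕ) = (i,b+1)) ↔ (((i',j') : Fin 2 × ℕ) = (i,b)) := by
      simp [Prod.ext_iff]
    simp only [hiff]

theorem pderiv_D_comm0 (dE : E → E) {D : R' → R'} (hD : IsDerivFn D)
    (hD_C : ∀ c, D (C c) = C (dE c)) (hD_X : ∀ (i : Fin 2) (j : ℕ), D (X (i,j)) = X (i,j+1))
    (i : Fin 2) (x : R') :
    pderiv (i, 0) (D x) - D (pderiv (i, 0) x) = 0 := by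
  have hzero : IsDerivFn (fun _ : R' => (0:R')) := ⟨by simp, by simp⟩
  refine IsDerivFn.mv_ext ((pderiv_isDerivFn (i,0)).commutator hD) hzero ?_ ?_ x
  · intro c
    show pderiv (i,0) (D (C c)) - D (pderiv (i,0) (C c)) = 0
    simp [hD_C, pderiv_C, hD.zero]
  · intro s
    obtain ⟨i', j'⟩ := s
    show pderiv (i,0) (D (X (i',j'))) - D (pderiv (i,0) (X (i',j'))) = 0
    rw [hD_X, pderiv_X_pair, pderiv_X_pair]
    have hDif : D (if ((i',j') : Fin 2 × ℕ) = (i,0) then (1:R') else 0) = 0 := by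
      split
      · exact hD.one
      · exact hD.zero
    rw [hDif, sub_zero, if_neg (by simp)]

theorem pderiv_pderiv_comm (u v : Fin 2 × ℕ) (x : R') :
    pderiv u (pderiv v x) - pderiv v (pderiv u x) = 0 := by
  have hzero : IsDerivFn (fun _ : R' => (0:R')) := ⟨by simp, by simp⟩
  refine IsDerivFn.mv_ext ((pderiv_isDerivFn u).commutator (pderiv_isDerivFn v)) hzero
    ?_ ?_ x
  · intro c
    show pderiv u (pderiv v (C c)) - pderiv v (pderiv u (C c)) = 0
    simp [pderiv_C]
  · intro s
    show pderiv u (pderiv v (X s)) - pderiv v (pderiv u (X s)) = 0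
    rw [pderiv_X_pair, pderiv_X_pair]
    have h1 : pderiv u (if (s : Fin 2 × ℕ) = v then (1:R') else 0) = 0 := by
      split <;> simp
    have h2 : pderiv v (if (s : Fin 2 × ℕ) = u then (1:R') else 0) = 0 := by
      split <;> simp
    rw [h1, h2, sub_zero]

set_option maxHeartbeats 1000000 in
theorem core (dE : E → E) {D : R' → R'} (hD : IsDerivFn D)
    (hD_C : ∀ c, D (C c) = C (dE c)) (hD_X : ∀ (i : Fin 2) (j : ℕ), D (X (i,j)) = X (i,j+1))
    {DK : K' → K'} (hDK : IsDerivFn DK) (hDKc : ∀ x : R', DK (φ' x) = φ' (D x))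
    {a' c₁ c₀ : K'} {A0 C1 C0 : R'}
    (ha' : a' = φ' A0) (hc1 : c₁ = φ' C1) (hc0 : c₀ = φ' C0)
    (hA0 : ∀ v : Fin 2 × ℕ, pderiv v A0 = 0)
    (hC1v : ∀ (i : Fin 2) (b : ℕ), 1 ≤ b → pderiv (i, b) C1 = 0)
    (hC0v : ∀ (i : Fin 2) (b : ℕ), 2 ≤ b → pderiv (i, b) C0 = 0)
    (hC0r1 : pderiv ((0 : Fin 2), 1) C0 = 0)
    (hC0r2 : pderiv ((1 : Fin 2), 1) C0 = - X ((0 : Fin 2), 0))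
    (t : ℕ) (pk : ℕ → K') (β : K')
    (htop : pk (t+1) = 1) (hzero : ∀ k, t+2 ≤ k → pk k = 0)
    (heq0 : DK (pk 0) - c₀ * pk 1 = β * pk 0)
    (hequ : ∀ k : ℕ, DK (pk (k+1)) + a' * (pk k * k) - c₁ * (pk (k+1) * ((k:K')+1)) -
      c₀ * (pk (k+2) * ((k:K')+2)) = ((t:K')+1) * a' * pk k + β * pk (k+1)) : False := by
  classical
  haveI : CharZero R' := by
    apply charZero_of_injective_algebraMap (R := E)
    rw [MvPolynomial.algebraMap_eq]
    exact MvPolynomial.C_injective _ _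
  haveI : CharZero K' :=
    charZero_of_injective_algebraMap
      (IsFractionRing.injective R' (FractionRing R'))
  -- extended partial derivatives
  have hex : ∀ v : Fin 2 × ℕ, ∃ Dv : K' → K',
      IsDerivFn Dv ∧ ∀ x : R', Dv (φ' x) = φ' (pderiv v x) :=
    fun v => exists_fracDeriv (fun y => pderiv v y) (pderiv_isDerivFn v)
  choose pd hpd hpdc using hex
  -- commutation relations
  have com1 : ∀ (i : Fin 2) (b : ℕ) (z : K'),
      pd (i,b+1) (DK z) = DK (pd (i,b+1) z) + pd (i,b) z := by
    intro i b z
    have hcomm : IsDerivFn (fun y : K' => pd (i,b+1) (DK y) - DK (pd (i,b+1) y)) :=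
      (hpd (i,b+1)).commutator hDK
    have hagree : ∀ x : R',
        pd (i,b+1) (DK (φ' x)) - DK (pd (i,b+1) (φ' x)) = pd (i,b) (φ' x) := by
      intro x
      rw [hDKc, hpdc, hpdc, hDKc, hpdc, ← map_sub, pderiv_D_comm dE hD hD_C hD_X i b x]
    have h := IsDerivFn.frac_ext hcomm (hpd (i,b)) hagree z
    linear_combination h
  have com0 : ∀ (i : Fin 2) (z : K'), pd (i,0) (DK z) = DK (pd (i,0) z) := by
    intro i z
    have hcomm : IsDerivFn (fun y : K' => pd (i,0) (DK y) - DK (pd (i,0) y)) :=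
      (hpd (i,0)).commutator hDK
    have hzeroD : IsDerivFn (fun _ : K' => (0:K')) := ⟨by simp, by simp⟩
    have hagree : ∀ x : R',
        pd (i,0) (DK (φ' x)) - DK (pd (i,0) (φ' x)) = (0:K') := by
      intro x
      rw [hDKc, hpdc, hpdc, hDKc, ← map_sub, pderiv_D_comm0 dE hD hD_C hD_X i x, map_zero]
    have h := IsDerivFn.frac_ext hcomm hzeroD hagree z
    linear_combination h
  have comm00 : ∀ z : K', pd ((0:Fin 2),0) (pd ((1:Fin 2),0) z) =
      pd ((1:Fin 2),0) (pd ((0:Fin 2),0) z) := by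
    intro z
    have hcomm : IsDerivFn (fun y : K' =>
        pd ((0:Fin 2),0) (pd ((1:Fin 2),0) y) - pd ((1:Fin 2),0) (pd ((0:Fin 2),0) y)) :=
      (hpd _).commutator (hpd _)
    have hzeroD : IsDerivFn (fun _ : K' => (0:K')) := ⟨by simp, by simp⟩
    have hagree : ∀ x : R',
        pd ((0:Fin 2),0) (pd ((1:Fin 2),0) (φ' x)) -
          pd ((1:Fin 2),0) (pd ((0:Fin 2),0) (φ' x)) = (0:K') := by
      intro x
      rw [hpdc, hpdc, hpdc, hpdc, ← map_sub, pderiv_pderiv_comm, map_zero]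
    have h := IsDerivFn.frac_ext hcomm hzeroD hagree z
    linear_combination h
  -- vanishing in high order
  have vanish : ∀ z : K', ∃ N : ℕ, ∀ (i : Fin 2) (b : ℕ), N ≤ b → pd (i,b) z = 0 := by
    intro z
    obtain ⟨pz, qz, hqz, hzz⟩ := exists_rep z
    refine ⟨(pz.vars ∪ qz.vars).sup Prod.snd + 1, fun i b hb => ?_⟩
    apply fracDeriv_eq_zero (hpd (i,b)) (hpdc (i,b)) hqz hzz
    · apply pderiv_eq_zero_of_notMem_vars
      intro hmem
      have := Finset.le_sup (f := Prod.snd) (Finset.mem_union_left qz.vars hmem)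
      simp only at this
      omega
    · apply pderiv_eq_zero_of_notMem_vars
      intro hmem
      have := Finset.le_sup (f := Prod.snd) (Finset.mem_union_right pz.vars hmem)
      simp only at this
      omega
  -- values of pd on the coefficients
  have hpa : ∀ v, pd v a' = 0 := by
    intro v; rw [ha', hpdc, hA0, map_zero]
  have hpc1 : ∀ (i : Fin 2) (b : ℕ), 1 ≤ b → pd (i,b) c₁ = 0 := by
    intro i b hb; rw [hc1, hpdc, hC1v i b hb, map_zero]
  have hpc0 : ∀ (i : Fin 2) (b : ℕ), 2 ≤ b → pd (i,b) c₀ = 0 := by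
    intro i b hb; rw [hc0, hpdc, hC0v i b hb, map_zero]
  have hpc0r1 : pd ((0:Fin 2),1) c₀ = 0 := by
    rw [hc0, hpdc, hC0r1, map_zero]
  have hpc0r2 : pd ((1:Fin 2),1) c₀ = -(φ' (X ((0:Fin 2),0))) := by
    rw [hc0, hpdc, hC0r2, map_neg]
  -- the value of β
  have hβval : β = -(a' * pk t) - ((t:K')+1) * c₁ := by
    have h := hequ t
    rw [htop, hzero (t+2) (by omega), hDK.one] at h
    linear_combination -h
  -- downward induction
  have hstep : ∀ b : ℕ, 1 ≤ b → (∀ (i : Fin 2) (k : ℕ), pd (i,b+1) (pk k) = 0) →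
      ∀ (i : Fin 2) (k : ℕ), pd (i,b) (pk k) = 0 := by
    intro b hb ih i k
    have hvc1 : pd (i,b+1) c₁ = 0 := hpc1 i (b+1) (by omega)
    have hvc0 : pd (i,b+1) c₀ = 0 := hpc0 i (b+1) (by omega)
    have hvβ : pd (i,b+1) β = 0 := by
      rw [hβval]
      simp only [(hpd (i,b+1)).sub, (hpd (i,b+1)).neg, (hpd (i,b+1)).2, (hpd (i,b+1)).1,
        (hpd (i,b+1)).natCast, (hpd (i,b+1)).one, ih, hpa, hvc1,
        mul_zero, zero_mul, add_zero, zero_add, neg_zero, sub_zero, sub_self]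
    have h2 : pd (i,b+1) (2:K') = 0 := by
      have e : (2:K') = ((2:ℕ):K') := by norm_num
      rw [e, (hpd (i,b+1)).natCast]
    rcases k with _ | k'
    · have h := congrArg (pd (i, b+1)) heq0
      simp only [(hpd (i,b+1)).sub, (hpd (i,b+1)).2, com1 i b, ih, hvc0, hvβ, hDK.zero,
        mul_zero, zero_mul, add_zero, zero_add, sub_zero, zero_sub, neg_zero] at h
      linear_combination h
    · have h := congrArg (pd (i, b+1)) (hequ k')
      simp only [(hpd (i,b+1)).sub, (hpd (i,b+1)).1, (hpd (i,b+1)).2,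
        (hpd (i,b+1)).natCast, (hpd (i,b+1)).one, h2, com1 i b, ih, hpa, hvc1, hvc0, hvβ,
        hDK.zero, mul_zero, zero_mul, add_zero, zero_add, sub_zero, zero_sub, neg_zero] at h
      linear_combination h
  have hhigh : ∃ N : ℕ, ∀ b : ℕ, N ≤ b → ∀ (i : Fin 2) (k : ℕ), pd (i,b) (pk k) = 0 := by
    choose Nf hNf using fun k => vanish (pk k)
    refine ⟨(Finset.range (t+2)).sup Nf, fun b hb i k => ?_⟩
    by_cases hk : k < t+2
    · exact hNf k i b (le_trans (Finset.le_sup (Finset.mem_range.mpr hk)) hb)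
    · rw [hzero k (by omega), (hpd (i,b)).zero]
  have Hall : ∀ b : ℕ, 1 ≤ b → ∀ (i : Fin 2) (k : ℕ), pd (i,b) (pk k) = 0 := by
    obtain ⟨N, hN⟩ := hhigh
    have main : ∀ m b : ℕ, 1 ≤ b → N ≤ b + m → ∀ (i : Fin 2) (k : ℕ), pd (i,b) (pk k) = 0 := by
      intro m
      induction m with
      | zero => intro b hb hNb; exact hN b (by omega)
      | succ m ihm =>
          intro b hb hNb
          exact hstep b hb (ihm (b+1) (by omega) (by omega))
    exact fun b hb => main N b hb (by omega)
  have H1 := Hall 1 (le_refl 1)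
  -- β has vanishing order-one partials
  have hβ1 : ∀ i : Fin 2, pd (i,1) β = 0 := by
    intro i
    rw [hβval]
    simp only [(hpd (i,1)).sub, (hpd (i,1)).neg, (hpd (i,1)).2, (hpd (i,1)).1,
      (hpd (i,1)).natCast, (hpd (i,1)).one, H1, hpa, hpc1 i 1 (le_refl 1),
      mul_zero, zero_mul, add_zero, zero_add, neg_zero, sub_zero, sub_self]
  have h2' : ∀ i : Fin 2, pd (i,1) (2:K') = 0 := by
    intro i
    have e : (2:K') = ((2:ℕ):K') := by norm_num
    rw [e, (hpd (i,1)).natCast]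
  -- stage: pk has no r₁ dependence at all
  have hr1 : ∀ k, pd ((0:Fin 2),0) (pk k) = 0 := by
    intro k
    rcases k with _ | k'
    · have h := congrArg (pd ((0:Fin 2), 1)) heq0
      simp only [(hpd ((0:Fin 2),1)).sub, (hpd ((0:Fin 2),1)).2, com1 0 0, H1, hpc0r1,
        hβ1, hDK.zero, mul_zero, zero_mul, add_zero, zero_add, sub_zero, zero_sub,
        neg_zero] at h
      linear_combination h
    · have h := congrArg (pd ((0:Fin 2), 1)) (hequ k')
      simp only [(hpd ((0:Fin 2),1)).sub, (hpd ((0:Fin 2),1)).1, (hpd ((0:Fin 2),1)).2,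
        (hpd ((0:Fin 2),1)).natCast, (hpd ((0:Fin 2),1)).one, h2' 0, com1 0 0, H1, hpa,
        hpc1 0 1 (le_refl 1), hpc0r1, hβ1, hDK.zero,
        mul_zero, zero_mul, add_zero, zero_add, sub_zero, zero_sub, neg_zero] at h
      linear_combination h
  -- stage: the key identity for pd (1,0) (pk t)
  have hG : pd ((1:Fin 2),0) (pk t) = -(((t:K')+1) * φ' (X ((0:Fin 2),(0:ℕ)))) := by
    rcases t with _ | t'
    · have htop' : pk 1 = 1 := htop
      have h := congrArg (pd ((1:Fin 2), 1)) heq0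
      rw [htop'] at h
      simp only [(hpd ((1:Fin 2),1)).sub, (hpd ((1:Fin 2),1)).2, com1 1 0, H1, hpc0r2,
        hβ1, hDK.zero, mul_zero, zero_mul, mul_one, add_zero, zero_add, sub_zero,
        zero_sub, neg_zero] at h
      push_cast
      linear_combination h
    · have htop' : pk (t'+2) = 1 := htop
      have h := congrArg (pd ((1:Fin 2), 1)) (hequ t')
      rw [htop'] at h
      simp only [(hpd ((1:Fin 2),1)).sub, (hpd ((1:Fin 2),1)).1, (hpd ((1:Fin 2),1)).2,
        (hpd ((1:Fin 2),1)).natCast, (hpd ((1:Fin 2),1)).one, h2' 1, com1 1 0, H1, hpa,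
        hpc1 1 1 (le_refl 1), hpc0r2, hβ1, hDK.zero,
        mul_zero, zero_mul, mul_one, one_mul, add_zero, zero_add, sub_zero, zero_sub,
        neg_zero] at h
      push_cast
      linear_combination h
  -- final contradiction
  have hfin := congrArg (pd ((0:Fin 2),0)) hG
  rw [comm00 (pk t), hr1 t, (hpd ((1:Fin 2),0)).zero] at hfin
  have hX00 : pd ((0:Fin 2),0) (φ' (X ((0:Fin 2),(0:ℕ)))) = 1 := by
    rw [hpdc, pderiv_X_self, map_one]
  rw [(hpd ((0:Fin 2),0)).neg, (hpd ((0:Fin 2),0)).2, hX00] at hfin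
  have hcast : pd ((0:Fin 2),0) ((t:K')+1) = 0 := by
    rw [(hpd ((0:Fin 2),0)).1, (hpd ((0:Fin 2),0)).natCast, (hpd ((0:Fin 2),0)).one,
      add_zero]
  rw [hcast] at hfin
  exact Nat.cast_add_one_ne_zero (R := K') t (by linear_combination hfin)

end Core

end SL3Aux


open SL3Aux in
set_option maxHeartbeats 4000000 in
set_option synthInstance.maxHeartbeats 1000000 in
/-- **Maximality of the differential ideal `[σ(f⁺_{w̄,3})]` for `SL₃` (Lemma 7.2 applied).**
Let `E` be a differential field of characteristic zero with derivation `dE`, let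
`a₁⁺, a₂⁺, a₃⁺, a₁⁻, a₂⁻, a₃⁻, a₁⁰, a₂⁰ ∈ E`, and let `K = E⟨r₁, r₂⟩` be the fraction field
of the differential polynomial ring `E{r₁, r₂}` (modelled as `MvPolynomial (Fin 2 × ℕ) E`,
the variable `X (i, j)` playing the role of `r_{i+1}^{(j)}`), with `D` the unique derivation
of `E{r₁, r₂}` extending `dE` and `DK` its unique extension to `K`.  Let `K{y}` be the
differential polynomial ring over `K`, modelled as `MvPolynomial ℕ K` with `X j` playing the
role of `y^{(j)}` and `Dy` the unique derivation extending `DK`.  Then the differential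
ideal generated by
`f = y' − a₃⁺y² + (a₃⁺r₁r₂ − a₂⁺r₂ − a₁⁺r₁ + a₁⁰ + a₂⁰)y + a₁⁻r₂ + a₃⁻ −
  r₁(a₂⁻ + (a₂⁰ − a₁⁰)r₂) + r₁r₂(a₂⁺r₂ − a₂⁰) − r₁r₂'`
is a maximal differential ideal of `K{y}`: it is proper, and every differential ideal
strictly containing it is the whole ring. -/
theorem maximal_differential_ideal_sl3
    {E : Type*} [Field E] [CharZero E] (dE : E → E)
    (hdE_add : ∀ a b : E, dE (a + b) = dE a + dE b)
    (hdE_mul : ∀ a b : E, dE (a * b) = a * dE b + dE a * b)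
    (a1p a2p a3p a1m a2m a3m a10 a20 : E)
    (D : MvPolynomial (Fin 2 × ℕ) E → MvPolynomial (Fin 2 × ℕ) E)
    (hD_add : ∀ p q, D (p + q) = D p + D q)
    (hD_mul : ∀ p q, D (p * q) = p * D q + D p * q)
    (hD_C : ∀ c : E, D (MvPolynomial.C c) = MvPolynomial.C (dE c))
    (hD_X : ∀ (i : Fin 2) (j : ℕ), D (X (i, j)) = X (i, j + 1))
    (DK : FractionRing (MvPolynomial (Fin 2 × ℕ) E) →
          FractionRing (MvPolynomial (Fin 2 × ℕ) E))
    (hDK_add : ∀ x y, DK (x + y) = DK x + DK y)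
    (hDK_mul : ∀ x y, DK (x * y) = x * DK y + DK x * y)
    (hDK_compat : ∀ p : MvPolynomial (Fin 2 × ℕ) E, DK (toFrac p) = toFrac (D p))
    (Dy : MvPolynomial ℕ (FractionRing (MvPolynomial (Fin 2 × ℕ) E)) →
          MvPolynomial ℕ (FractionRing (MvPolynomial (Fin 2 × ℕ) E)))
    (hDy_add : ∀ p q, Dy (p + q) = Dy p + Dy q)
    (hDy_mul : ∀ p q, Dy (p * q) = p * Dy q + Dy p * q)
    (hDy_C : ∀ c : FractionRing (MvPolynomial (Fin 2 × ℕ) E),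
      Dy (MvPolynomial.C c) = MvPolynomial.C (DK c))
    (hDy_X : ∀ j : ℕ, Dy (X j) = X (j + 1)) :
    let c₁ : FractionRing (MvPolynomial (Fin 2 × ℕ) E) :=
      toFrac (MvPolynomial.C a3p) * toFrac (X ((0 : Fin 2), 0)) *
          toFrac (X ((1 : Fin 2), 0)) -
        toFrac (MvPolynomial.C a2p) * toFrac (X ((1 : Fin 2), 0)) -
        toFrac (MvPolynomial.C a1p) * toFrac (X ((0 : Fin 2), 0)) +
        toFrac (MvPolynomial.C a10) + toFrac (MvPolynomial.C a20)
    let c₀ : FractionRing (MvPolynomial (Fin 2 × ℕ) E) :=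
      toFrac (MvPolynomial.C a1m) * toFrac (X ((1 : Fin 2), 0)) +
        toFrac (MvPolynomial.C a3m) -
        toFrac (X ((0 : Fin 2), 0)) * (toFrac (MvPolynomial.C a2m) +
          (toFrac (MvPolynomial.C a20) - toFrac (MvPolynomial.C a10)) *
            toFrac (X ((1 : Fin 2), 0))) +
        toFrac (X ((0 : Fin 2), 0)) * toFrac (X ((1 : Fin 2), 0)) *
          (toFrac (MvPolynomial.C a2p) * toFrac (X ((1 : Fin 2), 0)) -
            toFrac (MvPolynomial.C a20)) -
        toFrac (X ((0 : Fin 2), 0)) * toFrac (X ((1 : Fin 2), 1))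
    let f : MvPolynomial ℕ (FractionRing (MvPolynomial (Fin 2 × ℕ) E)) :=
      X 1 - MvPolynomial.C (toFrac (MvPolynomial.C a3p)) * X 0 ^ 2 +
        MvPolynomial.C c₁ * X 0 + MvPolynomial.C c₀
    diffIdealGen Dy {f} ≠ ⊤ ∧
      ∀ J : Ideal (MvPolynomial ℕ (FractionRing (MvPolynomial (Fin 2 × ℕ) E))),
        (∀ x ∈ J, Dy x ∈ J) → diffIdealGen Dy {f} < J → J = ⊤ := by
  intro c₁ c₀ f
  classical
  have hD' : IsDerivFn D := ⟨hD_add, hD_mul⟩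
  have hDK' : IsDerivFn DK := ⟨hDK_add, hDK_mul⟩
  have hDy' : IsDerivFn Dy := ⟨hDy_add, hDy_mul⟩
  set a' : FractionRing (MvPolynomial (Fin 2 × ℕ) E) := toFrac (MvPolynomial.C a3p) with ha'def
  have hf : f = fpoly a' c₁ c₀ := rfl
  set π := piHom DK a' c₁ c₀ with hπ
  have hπf : π (fpoly a' c₁ c₀) = 0 := piHom_f a' c₁ c₀ hDK'
  have hπDy : ∀ s, π (Dy s) = delta DK (wpoly a' c₁ c₀) (π s) :=
    piHom_Dy a' c₁ c₀ hDK' hDy' hDy_C hDy_X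
  -- the differential ideal generated by f is the kernel of π
  have hgen : diffIdealGen Dy {f} = RingHom.ker π := by
    apply le_antisymm
    · apply sInf_le
      constructor
      · rw [Set.singleton_subset_iff]
        show π f = 0
        rw [hf]; exact hπf
      · intro x hx
        have hx0 : π x = 0 := hx
        show π (Dy x) = 0
        rw [hπDy, hx0, (delta_isDerivFn (wpoly a' c₁ c₀) hDK').zero]
    · intro x hx
      rw [diffIdealGen, Submodule.mem_sInf]
      intro T hT
      have hfT : fpoly a' c₁ c₀ ∈ T := by
        rw [← hf]; exact hT.1 rfl
      have h := sub_LHom_piHom_mem a' c₁ c₀ hDK' hDy' hDy_C hDy_X T hfT hT.2 x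
      have hx0 : π x = 0 := hx
      rwa [← hπ, hx0, map_zero, sub_zero] at h
  constructor
  · -- properness
    intro htop
    rw [hgen] at htop
    have h1 : (1 : MvPolynomial ℕ (FractionRing (MvPolynomial (Fin 2 × ℕ) E))) ∈ RingHom.ker π :=
      htop ▸ Submodule.mem_top
    have : (1 : Polynomial (FractionRing (MvPolynomial (Fin 2 × ℕ) E))) = 0 := by
      have := RingHom.mem_ker.mp h1
      rwa [map_one] at this
    exact one_ne_zero this
  · -- maximality
    intro J hJclosed hlt
    rw [hgen] at hlt
    have hker_le : RingHom.ker π ≤ J := le_of_lt hlt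
    -- the coefficient polynomials
    set C1 : MvPolynomial (Fin 2 × ℕ) E := MvPolynomial.C a3p * X ((0:Fin 2),(0:ℕ)) * X ((1:Fin 2),(0:ℕ)) -
        MvPolynomial.C a2p * X ((1:Fin 2),(0:ℕ)) - MvPolynomial.C a1p * X ((0:Fin 2),(0:ℕ)) +
        MvPolynomial.C a10 + MvPolynomial.C a20 with hC1def
    set C0 : MvPolynomial (Fin 2 × ℕ) E := MvPolynomial.C a1m * X ((1:Fin 2),(0:ℕ)) + MvPolynomial.C a3m -
        X ((0:Fin 2),(0:ℕ)) * (MvPolynomial.C a2m +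
          (MvPolynomial.C a20 - MvPolynomial.C a10) * X ((1:Fin 2),(0:ℕ))) +
        X ((0:Fin 2),(0:ℕ)) * X ((1:Fin 2),(0:ℕ)) *
          (MvPolynomial.C a2p * X ((1:Fin 2),(0:ℕ)) - MvPolynomial.C a20) -
        X ((0:Fin 2),(0:ℕ)) * X ((1:Fin 2),(1:ℕ)) with hC0def
    have hc1 : c₁ = algebraMap (MvPolynomial (Fin 2 × ℕ) E) (FractionRing (MvPolynomial (Fin 2 × ℕ) E)) C1 := by
      show toFrac (MvPolynomial.C a3p) * toFrac (X ((0 : Fin 2), 0)) *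
          toFrac (X ((1 : Fin 2), 0)) -
        toFrac (MvPolynomial.C a2p) * toFrac (X ((1 : Fin 2), 0)) -
        toFrac (MvPolynomial.C a1p) * toFrac (X ((0 : Fin 2), 0)) +
        toFrac (MvPolynomial.C a10) + toFrac (MvPolynomial.C a20) = _
      rw [hC1def]
      simp only [toFrac, map_add, map_sub, map_mul]
    have hc0 : c₀ = algebraMap (MvPolynomial (Fin 2 × ℕ) E) (FractionRing (MvPolynomial (Fin 2 × ℕ) E)) C0 := by
      show toFrac (MvPolynomial.C a1m) * toFrac (X ((1 : Fin 2), 0)) +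
        toFrac (MvPolynomial.C a3m) -
        toFrac (X ((0 : Fin 2), 0)) * (toFrac (MvPolynomial.C a2m) +
          (toFrac (MvPolynomial.C a20) - toFrac (MvPolynomial.C a10)) *
            toFrac (X ((1 : Fin 2), 0))) +
        toFrac (X ((0 : Fin 2), 0)) * toFrac (X ((1 : Fin 2), 0)) *
          (toFrac (MvPolynomial.C a2p) * toFrac (X ((1 : Fin 2), 0)) -
            toFrac (MvPolynomial.C a20)) -
        toFrac (X ((0 : Fin 2), 0)) * toFrac (X ((1 : Fin 2), 1)) = _
      rw [hC0def]
      simp only [toFrac, map_add, map_sub, map_mul]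
    have ha' : a' = algebraMap (MvPolynomial (Fin 2 × ℕ) E) (FractionRing (MvPolynomial (Fin 2 × ℕ) E)) (MvPolynomial.C a3p) := rfl
    have hDKc : ∀ x : MvPolynomial (Fin 2 × ℕ) E, DK (algebraMap _ (FractionRing (MvPolynomial (Fin 2 × ℕ) E)) x) = algebraMap _ _ (D x) := hDK_compat
    -- partial derivative computations
    have hA0 : ∀ v : Fin 2 × ℕ, pderiv v (MvPolynomial.C a3p : MvPolynomial (Fin 2 × ℕ) E) = 0 := fun v => pderiv_C
    have hC1v : ∀ (i : Fin 2) (b : ℕ), 1 ≤ b → pderiv (i, b) C1 = 0 := by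
      intro i b hb
      have hne0 : ((0:Fin 2),(0:ℕ)) ≠ (i,b) := by
        intro hc
        have := congrArg Prod.snd hc
        simp only at this
        omega
      have hne1 : ((1:Fin 2),(0:ℕ)) ≠ (i,b) := by
        intro hc
        have := congrArg Prod.snd hc
        simp only at this
        omega
      have hne0' : (0 : Fin 2 × ℕ) ≠ (i,b) := hne0
      rw [hC1def]
      simp [pderiv_mul, pderiv_C, pderiv_X_of_ne hne0, pderiv_X_of_ne hne1,
        Pi.single_eq_of_ne hne0, Pi.single_eq_of_ne hne1, Pi.single_eq_of_ne hne0']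
    have hC0vgen : ∀ (i : Fin 2) (b : ℕ),
        ((0:Fin 2),(0:ℕ)) ≠ (i,b) → ((1:Fin 2),(0:ℕ)) ≠ (i,b) → ((1:Fin 2),(1:ℕ)) ≠ (i,b) →
        pderiv (i, b) C0 = 0 := by
      intro i b hne0 hne1 hne2
      have hne0' : (0 : Fin 2 × ℕ) ≠ (i,b) := hne0
      have hne2' : (1 : Fin 2 × ℕ) ≠ (i,b) := hne2
      rw [hC0def]
      simp [pderiv_mul, pderiv_C, pderiv_X_of_ne hne0, pderiv_X_of_ne hne1,
        pderiv_X_of_ne hne2, Pi.single_eq_of_ne hne0, Pi.single_eq_of_ne hne1,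
        Pi.single_eq_of_ne hne2, Pi.single_eq_of_ne hne0', Pi.single_eq_of_ne hne2']
    have hC0v : ∀ (i : Fin 2) (b : ℕ), 2 ≤ b → pderiv (i, b) C0 = 0 := by
      intro i b hb
      refine hC0vgen i b ?_ ?_ ?_ <;>
        · intro hc
          have := congrArg Prod.snd hc
          simp only at this
          omega
    have hC0r1 : pderiv ((0 : Fin 2), 1) C0 = 0 := by
      refine hC0vgen 0 1 ?_ ?_ ?_ <;>
        · intro hc
          first
          | (have := congrArg Prod.snd hc; simp only at this; omega)
          | (have := congrArg Prod.fst hc; exact absurd this (by decide))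
    have hC0r2 : pderiv ((1 : Fin 2), 1) C0 = - X ((0 : Fin 2), 0) := by
      have hne0 : ((0:Fin 2),(0:ℕ)) ≠ ((1:Fin 2),(1:ℕ)) := by decide
      have hne1 : ((1:Fin 2),(0:ℕ)) ≠ ((1:Fin 2),(1:ℕ)) := by decide
      have hne0' : (0 : Fin 2 × ℕ) ≠ ((1:Fin 2),(1:ℕ)) := hne0
      rw [hC0def]
      simp [pderiv_mul, pderiv_C, pderiv_X_of_ne hne0, pderiv_X_of_ne hne1,
        pderiv_X_self, Pi.single_eq_of_ne hne0, Pi.single_eq_of_ne hne1,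
        Pi.single_eq_of_ne hne0']
    -- the core nonexistence result
    have hcore : ∀ (t : ℕ) (pk : ℕ → FractionRing (MvPolynomial (Fin 2 × ℕ) E))
        (β : FractionRing (MvPolynomial (Fin 2 × ℕ) E)), pk (t+1) = 1 →
        (∀ k, t+2 ≤ k → pk k = 0) →
        (DK (pk 0) - c₀ * pk 1 = β * pk 0) →
        (∀ k : ℕ, DK (pk (k+1)) + a' * (pk k * k) -
          c₁ * (pk (k+1) * ((k:FractionRing (MvPolynomial (Fin 2 × ℕ) E))+1)) -
          c₀ * (pk (k+2) * ((k:FractionRing (MvPolynomial (Fin 2 × ℕ) E))+2)) =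
          ((t:FractionRing (MvPolynomial (Fin 2 × ℕ) E))+1) * a' * pk k + β * pk (k+1)) →
        False := by
      intro t pk β htop hzero heq0 hequ
      exact core dE hD' hD_C hD_X hDK' hDKc ha' hc1 hc0 hA0 hC1v hC0v hC0r1 hC0r2
        t pk β htop hzero heq0 hequ
    -- push J to K'[Y]
    set J' : Ideal (Polynomial (FractionRing (MvPolynomial (Fin 2 × ℕ) E))) := Ideal.map π J with hJ'
    have hπsurj : Function.Surjective π := piHom_surjective DK a' c₁ c₀
    have hJ'closed : ∀ x ∈ J', delta DK (wpoly a' c₁ c₀) x ∈ J' := by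
      intro y hy
      obtain ⟨x, hxJ, hxy⟩ := (Ideal.mem_map_iff_of_surjective π hπsurj).mp hy
      rw [← hxy, ← hπDy]
      exact Ideal.mem_map_of_mem π (hJclosed x hxJ)
    have hJ'bot : J' ≠ ⊥ := by
      obtain ⟨x, hxJ, hxnot⟩ := SetLike.exists_of_lt hlt
      rw [Submodule.ne_bot_iff]
      refine ⟨π x, Ideal.mem_map_of_mem π hxJ, fun hc => hxnot ?_⟩
      exact RingHom.mem_ker.mpr hc
    have hJ'top : J' = ⊤ := simple a' c₁ c₀ hDK' hcore J' hJ'closed hJ'bot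
    -- pull back
    have h1J' : (1 : Polynomial (FractionRing (MvPolynomial (Fin 2 × ℕ) E))) ∈ J' := hJ'top ▸ Submodule.mem_top
    obtain ⟨u, huJ, huone⟩ := (Ideal.mem_map_iff_of_surjective π hπsurj).mp h1J'
    have hsub : u - 1 ∈ RingHom.ker π := by
      rw [RingHom.mem_ker, map_sub, huone, map_one, sub_self]
    have h1 : (1 : MvPolynomial ℕ (FractionRing (MvPolynomial (Fin 2 × ℕ) E))) ∈ J := by
      have := J.sub_mem huJ (hker_le hsub)
      simpa using this
    exact Ideal.eq_top_iff_one J |>.mpr h1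
end
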